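/- arXiv:2207.11840 — 8 statements merged into one kernel-verified Lean document; each statement's English description precedes it below -/
import Mathlib

section
/- Let I be a finite interval of integers containing N integers and let z_n ∈ ℂ for n ∈ I. Then for every integer R ≥ 1, |∑_{n∈I} z_n|² ≤ ((N+R−1)/R) · ∑_{|r|<R} (1 − |r|/R) · ∑_{n∈I, n+r∈I} z_{n+r} · conj(z_n). -/
open Finset

lemma count_pairs (R : ℕ) (r : ℤ) (h : r.natAbs < R) :
    ((Finset.range R ×ˢ Finset.range R).filter fun p => (p.1:ℤ) - (p.2:ℤ) = r).card
      = R - r.natAbs := by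
  rw [← Finset.card_range (R - r.natAbs)]
  apply Finset.card_bij' (fun p _ => p.1 - r.toNat) (fun k _ => (k + r.toNat, k + (-r).toNat))
  · intro p hp
    simp only [Finset.mem_filter, Finset.mem_product, Finset.mem_range] at hp
    simp only [Finset.mem_range]
    omega
  · intro k hk
    simp only [Finset.mem_range] at hk
    simp only [Finset.mem_filter, Finset.mem_product, Finset.mem_range]
    omega
  · intro p hp
    simp only [Finset.mem_filter, Finset.mem_product, Finset.mem_range] at hp
    have : p.1 - r.toNat + r.toNat = p.1 := by omega
    have h2 : p.1 - r.toNat + (-r).toNat = p.2 := by omega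
    simp [this, h2]
  · intro k hk
    simp

theorem stmt1 (a b : ℤ) (N : ℕ) (hN : N = (Finset.Icc a b).card) (z : ℤ → ℂ)
    (R : ℕ) (hR : 1 ≤ R) :
    ‖∑ n ∈ Finset.Icc a b, z n‖^2 ≤
      (((N : ℝ) + R - 1)/R) * (∑ r ∈ Finset.Icc (-(R:ℤ)+1) ((R:ℤ)-1),
        (1 - |(r:ℝ)|/R) *
          (∑ n ∈ (Finset.Icc a b).filter (fun n => n + r ∈ Finset.Icc a b),
            z (n+r) * (starRingEnd ℂ) (z n)).re) := by
  classical
  set I : Finset ℤ := Finset.Icc a b with hI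
  set w : ℤ → ℂ := fun n => if n ∈ Finset.Icc a b then z n else 0 with hw
  set T : ℤ → ℂ := fun r => ∑ n ∈ I.filter (fun n => n + r ∈ I),
      z (n+r) * (starRingEnd ℂ) (z n) with hTdef
  set J : Finset ℤ := Finset.Icc (a - R + 1) b with hJ
  set S : ℂ := ∑ n ∈ I, z n with hS
  set F : ℤ → ℂ := fun m => ∑ h ∈ Finset.range R, w (m + h) with hF
  have hw0 : ∀ x : ℤ, x ∉ Finset.Icc a b → w x = 0 := by
    intro x hx
    rw [hw]
    exact if_neg hx
  have hwI : ∀ x : ℤ, x ∈ Finset.Icc a b → w x = z x := by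
    intro x hx
    rw [hw]
    exact if_pos hx
  -- shift lemma
  have hshift : ∀ (r c d : ℤ), c ≤ a → b ≤ d →
      ∑ n ∈ Finset.Icc c d, w (n + r) * (starRingEnd ℂ) (w n) = T r := by
    intro r c d hc hd
    rw [← Finset.sum_subset (Finset.Icc_subset_Icc hc hd) (by
      intro x _ hx
      rw [hw0 x hx]
      simp)]
    simp only [hTdef, Finset.sum_filter]
    apply Finset.sum_congr rfl
    intro n hn
    by_cases h : n + r ∈ I
    · rw [if_pos h, hwI _ h, hwI _ hn]
    · rw [if_neg h, hw0 _ h, zero_mul]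
  -- step 1
  have step1 : ∑ m ∈ J, F m = (R : ℂ) * S := by
    rw [hF, Finset.sum_comm]
    have : ∀ h ∈ Finset.range R, ∑ m ∈ J, w (m + (h:ℤ)) = S := by
      intro h hh
      rw [Finset.mem_range] at hh
      have hmap : ∑ m ∈ J, w (m + (h:ℤ)) = ∑ k ∈ Finset.Icc (a - R + 1 + h) (b + h), w k := by
        rw [← Finset.map_add_right_Icc, Finset.sum_map]
        rfl
      rw [hmap]
      rw [← Finset.sum_subset (Finset.Icc_subset_Icc (by omega) (by omega) :
          Finset.Icc a b ⊆ Finset.Icc (a - R + 1 + h) (b + h)) (by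
        intro x _ hx
        exact hw0 x hx)]
      rw [hS]
      exact Finset.sum_congr rfl fun n hn => hwI n hn
    rw [Finset.sum_congr rfl this]
    simp [mul_comm]
  -- step 2: expansion
  have step2 : ∑ m ∈ J, F m * (starRingEnd ℂ) (F m)
      = ∑ r ∈ Finset.Icc (-(R:ℤ)+1) ((R:ℤ)-1), ((R - r.natAbs : ℕ) : ℂ) * T r := by
    have expand : ∀ m : ℤ, F m * (starRingEnd ℂ) (F m)
        = ∑ h ∈ Finset.range R, ∑ h' ∈ Finset.range R,
            w (m + h) * (starRingEnd ℂ) (w (m + h')) := by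
      intro m
      rw [hF, map_sum, Finset.sum_mul_sum]
    simp_rw [expand]
    rw [Finset.sum_comm]
    have inner : ∀ h ∈ Finset.range R,
        (∑ h' ∈ Finset.range R, ∑ m ∈ J, w (m + (h:ℤ)) * (starRingEnd ℂ) (w (m + (h':ℤ))))
          = ∑ h' ∈ Finset.range R, T ((h:ℤ) - h') := by
      intro h hh
      rw [Finset.mem_range] at hh
      apply Finset.sum_congr rfl
      intro h' hh'
      rw [Finset.mem_range] at hh'
      have hmap : ∑ m ∈ J, w (m + (h:ℤ)) * (starRingEnd ℂ) (w (m + (h':ℤ)))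
          = ∑ n ∈ Finset.Icc (a - R + 1 + h') (b + h'),
              w (n + ((h:ℤ) - h')) * (starRingEnd ℂ) (w n) := by
        rw [← Finset.map_add_right_Icc, Finset.sum_map]
        apply Finset.sum_congr rfl
        intro m _
        simp only [addRightEmbedding_apply]
        congr 2
        ring
      rw [hmap, hshift _ _ _ (by omega) (by omega)]
    calc ∑ h ∈ Finset.range R, ∑ m ∈ J, ∑ h' ∈ Finset.range R,
            w (m + (h:ℤ)) * (starRingEnd ℂ) (w (m + (h':ℤ)))
        = ∑ h ∈ Finset.range R, ∑ h' ∈ Finset.range R, ∑ m ∈ J,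
            w (m + (h:ℤ)) * (starRingEnd ℂ) (w (m + (h':ℤ))) := by
          exact Finset.sum_congr rfl fun h _ => Finset.sum_comm
      _ = ∑ h ∈ Finset.range R, ∑ h' ∈ Finset.range R, T ((h:ℤ) - h') := by
          exact Finset.sum_congr rfl inner
      _ = ∑ p ∈ Finset.range R ×ˢ Finset.range R, T ((p.1:ℤ) - p.2) := by
          rw [Finset.sum_product]
      _ = ∑ r ∈ Finset.Icc (-(R:ℤ)+1) ((R:ℤ)-1),
            ∑ p ∈ (Finset.range R ×ˢ Finset.range R).filter
              (fun p => (p.1:ℤ) - (p.2:ℤ) = r), T ((p.1:ℤ) - p.2) := by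
          rw [Finset.sum_fiberwise_of_maps_to]
          intro p hp
          simp only [Finset.mem_product, Finset.mem_range] at hp
          simp only [Finset.mem_Icc]
          omega
      _ = ∑ r ∈ Finset.Icc (-(R:ℤ)+1) ((R:ℤ)-1), ((R - r.natAbs : ℕ) : ℂ) * T r := by
          apply Finset.sum_congr rfl
          intro r hr
          rw [Finset.mem_Icc] at hr
          calc ∑ p ∈ (Finset.range R ×ˢ Finset.range R).filter
                  (fun p => (p.1:ℤ) - (p.2:ℤ) = r), T ((p.1:ℤ) - p.2)
              = ∑ _p ∈ (Finset.range R ×ˢ Finset.range R).filter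
                  (fun p => (p.1:ℤ) - (p.2:ℤ) = r), T r :=
                Finset.sum_congr rfl (fun p hp => by rw [(Finset.mem_filter.1 hp).2])
            _ = ((R - r.natAbs : ℕ) : ℂ) * T r := by
                rw [Finset.sum_const, count_pairs R r (by omega), nsmul_eq_mul]
  -- final assembly
  have hR0 : (0:ℝ) < R := by exact_mod_cast hR
  have hcard : (J.card : ℝ) ≤ (N:ℝ) + R - 1 := by
    have h1 : J.card = (b - (a - R + 1) + 1).toNat := by rw [hJ, Int.card_Icc]; ring_nf
    have h2 : N = (b + 1 - a).toNat := by rw [hN, hI, Int.card_Icc]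
    have h3 : (J.card : ℤ) ≤ (N : ℤ) + R - 1 := by omega
    exact_mod_cast h3
  have hre : ∀ u : ℂ, (u * (starRingEnd ℂ) u).re = ‖u‖^2 := by
    intro u
    rw [Complex.mul_conj]
    simp [Complex.sq_norm]
  set X : ℝ := ∑ r ∈ Finset.Icc (-(R:ℤ)+1) ((R:ℤ)-1),
      ((R - r.natAbs : ℕ) : ℝ) * (T r).re with hX
  have hXeq : ∑ m ∈ J, ‖F m‖^2 = X := by
    have : ∑ m ∈ J, ‖F m‖^2 = (∑ m ∈ J, F m * (starRingEnd ℂ) (F m)).re := by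
      rw [Complex.re_sum]
      exact Finset.sum_congr rfl fun m _ => (hre (F m)).symm
    rw [this, step2, Complex.re_sum, hX]
    apply Finset.sum_congr rfl
    intro r _
    simp [Complex.mul_re]
  have hX0 : 0 ≤ X := by
    rw [← hXeq]
    positivity
  have key : (R:ℝ)^2 * ‖S‖^2 ≤ ((N:ℝ) + R - 1) * X := by
    have c1 : (R:ℝ)^2 * ‖S‖^2 = ‖(R:ℂ) * S‖^2 := by
      rw [norm_mul, mul_pow]
      norm_num
    have c2 : ‖(R:ℂ) * S‖^2 ≤ (J.card : ℝ) * ∑ m ∈ J, ‖F m‖^2 := by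
      rw [← step1]
      calc ‖∑ m ∈ J, F m‖^2 ≤ (∑ m ∈ J, ‖F m‖)^2 := by
            have := norm_sum_le J F
            nlinarith [norm_nonneg (∑ m ∈ J, F m), Finset.sum_nonneg
              (fun m (_ : m ∈ J) => norm_nonneg (F m))]
        _ ≤ (J.card : ℝ) * ∑ m ∈ J, ‖F m‖^2 := sq_sum_le_card_mul_sum_sq
    calc (R:ℝ)^2 * ‖S‖^2 = ‖(R:ℂ) * S‖^2 := c1
      _ ≤ (J.card : ℝ) * X := by rw [← hXeq]; exact c2
      _ ≤ ((N:ℝ) + R - 1) * X := mul_le_mul_of_nonneg_right hcard hX0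
  have hterm : ∀ r ∈ Finset.Icc (-(R:ℤ)+1) ((R:ℤ)-1),
      (1 - |(r:ℝ)|/R) * (T r).re = (((R - r.natAbs : ℕ):ℝ) * (T r).re) / R := by
    intro r hr
    rw [Finset.mem_Icc] at hr
    have hle : r.natAbs ≤ R := by omega
    have h2 : ((R - r.natAbs : ℕ):ℝ) = (R:ℝ) - (r.natAbs:ℝ) := by
      push_cast [hle]; ring
    have h3 : (r.natAbs:ℝ) = |(r:ℝ)| := by
      simp [Nat.cast_natAbs]
    rw [h2, h3]
    field_simp
  rw [Finset.sum_congr rfl hterm, ← Finset.sum_div, ← hX]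
  rw [div_mul_div_comm]
  rw [le_div_iff₀ (by positivity : (0:ℝ) < R * R)]
  nlinarith [key]
end

section
/- Let I be a finite interval of integers containing N integers, let z_n ∈ ℂ for n ∈ I, and let K ⊂ ℕ be a finite nonempty set. Then |∑_{n∈I} z_n|² ≤ ((N + max K − min K)/|K|²) · ∑_{k₁,k₂∈K} ∑_{n∈ℤ : n ∈ I, n+k₁−k₂ ∈ I} z_n · conj(z_{n+k₁−k₂}). -/
open Finset

theorem stmt2 (a b : ℤ) (N : ℕ) (hN : N = (Finset.Icc a b).card) (z : ℤ → ℂ)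
    (K : Finset ℕ) (hK : K.Nonempty) :
    ‖∑ n ∈ Finset.Icc a b, z n‖^2 ≤
      (((N : ℝ) + K.max' hK - K.min' hK)/(K.card^2)) *
        (∑ k₁ ∈ K, ∑ k₂ ∈ K,
          (∑ n ∈ (Finset.Icc a b).filter
              (fun n => n + (k₁:ℤ) - (k₂:ℤ) ∈ Finset.Icc a b),
            z n * (starRingEnd ℂ) (z (n + (k₁:ℤ) - (k₂:ℤ)))).re) := by
  classical
  set I := Finset.Icc a b with hI
  set w : ℤ → ℂ := fun n => if n ∈ I then z n else 0 with hw
  set kmin : ℕ := K.min' hK with hkmin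
  set kmax : ℕ := K.max' hK with hkmax
  have hmm : kmin ≤ kmax := K.min'_le _ (K.max'_mem hK)
  have hKc : 0 < K.card := Finset.card_pos.mpr hK
  set J : Finset ℤ := Finset.Icc (a - kmax) (b - kmin) with hJ
  set f : ℤ → ℂ := fun n => ∑ k ∈ K, w (n + (k : ℤ)) with hf
  -- step 1: shifted sums
  have hA : ∀ k ∈ K, ∑ n ∈ J, w (n + (k : ℤ)) = ∑ n ∈ I, z n := by
    intro k hk
    have hstep : ∑ n ∈ J, w (n + (k : ℤ)) =
        ∑ m ∈ Finset.Icc (a - kmax + k) (b - kmin + k), w m := by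
      rw [← Finset.map_add_right_Icc, Finset.sum_map]
      rfl
    rw [hstep]
    have hsub : I ⊆ Finset.Icc (a - kmax + k) (b - kmin + k) := by
      intro m hm
      have h1 : (k : ℤ) ≤ kmax := by exact_mod_cast K.le_max' k hk
      have h2 : (kmin : ℤ) ≤ k := by exact_mod_cast K.min'_le k hk
      simp only [hI, Finset.mem_Icc] at hm ⊢
      omega
    rw [← Finset.sum_subset hsub (fun x _ hx => by simp [hw, hx])]
    exact Finset.sum_congr rfl (fun x hx => by simp [hw, hx])
  have key : (K.card : ℂ) * ∑ n ∈ I, z n = ∑ n ∈ J, f n := by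
    simp only [hf]
    rw [Finset.sum_comm, Finset.sum_congr rfl hA]
    simp [mul_comm]
  -- step 2: Cauchy-Schwarz
  have hCS : ‖∑ n ∈ J, f n‖ ^ 2 ≤ (J.card : ℝ) * ∑ n ∈ J, ‖f n‖ ^ 2 := by
    calc ‖∑ n ∈ J, f n‖ ^ 2 ≤ (∑ n ∈ J, ‖f n‖) ^ 2 := by
          exact pow_le_pow_left₀ (norm_nonneg _) (norm_sum_le J f) 2
      _ ≤ (∑ n ∈ J, (1:ℝ) ^ 2) * ∑ n ∈ J, ‖f n‖ ^ 2 := by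
          have := Finset.sum_mul_sq_le_sq_mul_sq J (fun _ => (1:ℝ)) (fun n => ‖f n‖)
          simpa using this
      _ = (J.card : ℝ) * ∑ n ∈ J, ‖f n‖ ^ 2 := by simp
  -- step 3: expand ∑ ‖f n‖²
  have hsw : (∑ k₁ ∈ K, ∑ k₂ ∈ K, ∑ n ∈ J,
        w (n + (k₁:ℤ)) * (starRingEnd ℂ) (w (n + (k₂:ℤ))))
      = ∑ n ∈ J, f n * (starRingEnd ℂ) (f n) := by
    calc (∑ k₁ ∈ K, ∑ k₂ ∈ K, ∑ n ∈ J,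
            w (n + (k₁:ℤ)) * (starRingEnd ℂ) (w (n + (k₂:ℤ))))
        = ∑ k₁ ∈ K, ∑ n ∈ J, ∑ k₂ ∈ K,
            w (n + (k₁:ℤ)) * (starRingEnd ℂ) (w (n + (k₂:ℤ))) :=
          Finset.sum_congr rfl (fun _ _ => Finset.sum_comm)
      _ = ∑ n ∈ J, ∑ k₁ ∈ K, ∑ k₂ ∈ K,
            w (n + (k₁:ℤ)) * (starRingEnd ℂ) (w (n + (k₂:ℤ))) := Finset.sum_comm
      _ = ∑ n ∈ J, f n * (starRingEnd ℂ) (f n) := by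
          apply Finset.sum_congr rfl
          intro n _
          simp only [hf, map_sum, Finset.sum_mul_sum]
  have hB : ∑ n ∈ J, ‖f n‖ ^ 2 =
      (∑ k₁ ∈ K, ∑ k₂ ∈ K, ∑ n ∈ J,
        w (n + (k₁:ℤ)) * (starRingEnd ℂ) (w (n + (k₂:ℤ)))).re := by
    rw [hsw, Complex.re_sum]
    apply Finset.sum_congr rfl
    intro n _
    simp [Complex.mul_conj, Complex.normSq_eq_norm_sq, ← Complex.ofReal_pow]
  -- step 4: identify inner sums
  have hC : ∀ k₁ ∈ K, ∀ k₂ ∈ K,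
      ∑ n ∈ J, w (n + (k₁:ℤ)) * (starRingEnd ℂ) (w (n + (k₂:ℤ)))
      = ∑ n ∈ I.filter (fun n => n + (k₂:ℤ) - (k₁:ℤ) ∈ I),
          z n * (starRingEnd ℂ) (z (n + (k₂:ℤ) - (k₁:ℤ))) := by
    intro k₁ hk₁ k₂ hk₂
    have h1 : (k₁ : ℤ) ≤ kmax := by exact_mod_cast K.le_max' k₁ hk₁
    have h2 : (kmin : ℤ) ≤ k₁ := by exact_mod_cast K.min'_le k₁ hk₁
    have h3 : (k₂ : ℤ) ≤ kmax := by exact_mod_cast K.le_max' k₂ hk₂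
    have h4 : (kmin : ℤ) ≤ k₂ := by exact_mod_cast K.min'_le k₂ hk₂
    have hsub : I.filter (fun n => n + (k₂:ℤ) - (k₁:ℤ) ∈ I) ⊆
        Finset.Icc (a - kmax + k₁) (b - kmin + k₁) := by
      intro m hm
      simp only [hI, Finset.mem_filter, Finset.mem_Icc] at hm ⊢
      omega
    have step : ∑ n ∈ J, w (n + (k₁:ℤ)) * (starRingEnd ℂ) (w (n + (k₂:ℤ)))
        = ∑ m ∈ Finset.Icc (a - kmax + k₁) (b - kmin + k₁),
            w m * (starRingEnd ℂ) (w (m + (k₂:ℤ) - (k₁:ℤ))) := by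
      rw [← Finset.map_add_right_Icc, Finset.sum_map]
      apply Finset.sum_congr rfl
      intro n _
      simp only [addRightEmbedding_apply]
      have he : n + (k₁:ℤ) + (k₂:ℤ) - (k₁:ℤ) = n + (k₂:ℤ) := by ring
      rw [he]
    rw [step]
    rw [← Finset.sum_subset hsub]
    · apply Finset.sum_congr rfl
      intro m hm
      simp only [hI, Finset.mem_filter] at hm
      simp only [hw]
      rw [if_pos (show m ∈ I from hm.1), if_pos (show m + (k₂:ℤ) - (k₁:ℤ) ∈ I from hm.2)]
    · intro x _ hx
      simp only [hI, Finset.mem_filter, not_and] at hx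
      by_cases hx1 : x ∈ Finset.Icc a b
      · have h0 : w (x + (k₂:ℤ) - (k₁:ℤ)) = 0 := by
          simp only [hw]
          rw [if_neg (hx hx1)]
        rw [h0, map_zero, mul_zero]
      · have h0 : w x = 0 := by
          simp only [hw]
          rw [if_neg hx1]
        rw [h0, zero_mul]
  -- combine step 3 and 4, swap k₁ k₂
  have hB2 : ∑ n ∈ J, ‖f n‖ ^ 2 =
      (∑ k₁ ∈ K, ∑ k₂ ∈ K,
          (∑ n ∈ I.filter (fun n => n + (k₁:ℤ) - (k₂:ℤ) ∈ I),
            z n * (starRingEnd ℂ) (z (n + (k₁:ℤ) - (k₂:ℤ)))).re) := by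
    rw [hB]
    have e : (∑ k₁ ∈ K, ∑ k₂ ∈ K, ∑ n ∈ J,
          w (n + (k₁:ℤ)) * (starRingEnd ℂ) (w (n + (k₂:ℤ))))
        = ∑ k₁ ∈ K, ∑ k₂ ∈ K,
            ∑ n ∈ I.filter (fun n => n + (k₁:ℤ) - (k₂:ℤ) ∈ I),
              z n * (starRingEnd ℂ) (z (n + (k₁:ℤ) - (k₂:ℤ))) := by
      rw [Finset.sum_comm]
      apply Finset.sum_congr rfl
      intro k₁ hk₁
      apply Finset.sum_congr rfl
      intro k₂ hk₂
      exact hC k₂ hk₂ k₁ hk₁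
    rw [e, Complex.re_sum]
    exact Finset.sum_congr rfl (fun k₁ _ => Complex.re_sum _ _)
  -- cardinality bound
  have hJcard : (J.card : ℝ) ≤ (N : ℝ) + kmax - kmin := by
    have h1 : (J.card : ℤ) ≤ (N : ℤ) + kmax - kmin := by
      have e1 : J.card = (b - (kmin:ℤ) + 1 - (a - (kmax:ℤ))).toNat := Int.card_Icc _ _
      have e2 : N = (b + 1 - a).toNat := by rw [hN, hI, Int.card_Icc]
      have h5 : (kmin : ℤ) ≤ kmax := by exact_mod_cast hmm
      omega
    exact_mod_cast h1
  have hpos : 0 ≤ ∑ n ∈ J, ‖f n‖ ^ 2 := Finset.sum_nonneg (fun n _ => sq_nonneg _)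
  -- final assembly
  have hnorm : (K.card : ℝ) ^ 2 * ‖∑ n ∈ I, z n‖ ^ 2 = ‖∑ n ∈ J, f n‖ ^ 2 := by
    rw [← key, norm_mul]
    simp [mul_pow]
  have hfinal : (K.card : ℝ) ^ 2 * ‖∑ n ∈ I, z n‖ ^ 2 ≤
      ((N : ℝ) + kmax - kmin) * ∑ n ∈ J, ‖f n‖ ^ 2 := by
    rw [hnorm]
    exact hCS.trans (mul_le_mul_of_nonneg_right hJcard hpos)
  rw [hB2] at hfinal
  have hc2 : (0:ℝ) < (K.card : ℝ) ^ 2 := by positivity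
  rw [div_mul_eq_mul_div, le_div_iff₀ hc2, mul_comm (‖∑ n ∈ I, z n‖^2)]
  exact hfinal
end

section
/- Let N, r, λ be nonnegative integers and α > 0, β ≥ 0 real numbers. Then the number of n ≤ N for which s(⌊αn + αr + β⌋) − s(⌊αn + β⌋) ≠ s_λ(⌊αn + αr + β⌋) − s_λ(⌊αn + β⌋) is at most r·(αN/2^λ + 2). -/
/-- Sum of binary digits of `n`. -/
def s (n : ℕ) : ℕ := (Nat.digits 2 n).sum

/-- Sum of the `lam` lowest-order binary digits of `n`. -/
def sl (lam n : ℕ) : ℕ := s (n % 2^lam)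

lemma s_two_step (m : ℕ) : s m = m % 2 + s (m / 2) := by
  rcases Nat.eq_zero_or_pos m with rfl | hm
  · simp [s]
  · rw [s, Nat.digits_def' (by norm_num : 1 < 2) hm]
    simp [s]

lemma s_split (lam : ℕ) : ∀ m : ℕ, s m = sl lam m + s (m / 2^lam) := by
  induction lam with
  | zero => intro m; simp [sl, s, Nat.mod_one]
  | succ lam ih =>
    intro m
    have hps : 2 ^ (lam + 1) = 2 * 2 ^ lam := by ring
    have h1 : m / 2 ^ (lam + 1) = (m / 2) / 2 ^ lam := by
      rw [hps, ← Nat.div_div_eq_div_mul]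
    have h2 : (m % 2 ^ (lam + 1)) / 2 = (m / 2) % 2 ^ lam := by
      rw [hps]; exact Nat.mod_mul_right_div_self m 2 (2 ^ lam)
    have h3 : (m % 2 ^ (lam + 1)) % 2 = m % 2 :=
      Nat.mod_mod_of_dvd m ⟨2 ^ lam, hps⟩
    calc s m = m % 2 + s (m / 2) := s_two_step m
    _ = m % 2 + (sl lam (m / 2) + s (m / 2 / 2 ^ lam)) := by rw [← ih]
    _ = sl (lam + 1) m + s (m / 2 ^ (lam + 1)) := by
        rw [h1]; unfold sl
        rw [s_two_step (m % 2 ^ (lam + 1)), h2, h3]; ring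

theorem stmt3 (N r lam : ℕ) (α β : ℝ) (hα : 0 < α) (hβ : 0 ≤ β) :
    (((Finset.Icc 1 N).filter (fun n : ℕ =>
        (s (⌊α*(n:ℝ) + α*r + β⌋).toNat : ℤ) - (s (⌊α*(n:ℝ) + β⌋).toNat : ℤ) ≠
        (sl lam (⌊α*(n:ℝ) + α*r + β⌋).toNat : ℤ) - (sl lam (⌊α*(n:ℝ) + β⌋).toNat : ℤ))).card : ℝ)
      ≤ r * (α*N/2^lam + 2) := by
  set H : ℕ → ℕ := fun t => (⌊α*(t:ℝ) + β⌋).toNat / 2^lam with hH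
  have hxnn : ∀ t : ℕ, (0:ℝ) ≤ α*(t:ℝ) + β := fun t => by positivity
  have hfl : ∀ t : ℕ, ((⌊α*(t:ℝ) + β⌋).toNat : ℝ) = (⌊α*(t:ℝ) + β⌋ : ℝ) := by
    intro t
    have := Int.toNat_of_nonneg (Int.floor_nonneg.mpr (hxnn t))
    exact_mod_cast congrArg (Int.cast : ℤ → ℝ) this
  have Hmono : Monotone H := by
    intro a b hab
    apply Nat.div_le_div_right
    apply Int.toNat_le_toNat
    apply Int.floor_le_floor
    have : (a:ℝ) ≤ b := by exact_mod_cast hab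
    nlinarith
  have hpos : (0:ℝ) < 2^lam := by positivity
  -- upper and lower real bounds on H
  have Hub : ∀ t : ℕ, (H t : ℝ) ≤ (α*(t:ℝ) + β)/2^lam := by
    intro t
    rw [le_div_iff₀ hpos]
    calc (H t : ℝ) * 2^lam = ((H t * 2^lam : ℕ) : ℝ) := by push_cast; ring
    _ ≤ ((⌊α*(t:ℝ) + β⌋).toNat : ℝ) := by
        exact_mod_cast Nat.div_mul_le_self _ _
    _ ≤ α*(t:ℝ) + β := by rw [hfl t]; exact Int.floor_le _
  have Hlb : ∀ t : ℕ, (α*(t:ℝ) + β)/2^lam - 1 ≤ (H t : ℝ) := by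
    intro t
    have hb : 2^lam * H t + (⌊α*(t:ℝ) + β⌋).toNat % 2^lam = (⌊α*(t:ℝ) + β⌋).toNat :=
      Nat.div_add_mod (⌊α*(t:ℝ) + β⌋).toNat (2^lam)
    have hm : (⌊α*(t:ℝ) + β⌋).toNat % 2^lam < 2^lam := Nat.mod_lt _ (by positivity)
    have h1 : α*(t:ℝ) + β - 1 ≤ ((⌊α*(t:ℝ) + β⌋).toNat : ℝ) := by
      rw [hfl t]; have := Int.lt_floor_add_one (α*(t:ℝ) + β); linarith
    have hle : (⌊α*(t:ℝ) + β⌋).toNat + 1 ≤ 2^lam * H t + 2^lam := by omega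
    have h2 : ((⌊α*(t:ℝ) + β⌋).toNat : ℝ) + 1 ≤ 2^lam * (H t : ℝ) + 2^lam := by
      exact_mod_cast hle
    rw [sub_le_iff_le_add, div_le_iff₀ hpos]
    nlinarith
  -- bad set is covered by step-crossing sets
  set B : ℕ → Finset ℕ := fun j =>
    (Finset.Icc 1 N).filter (fun n => H (n+j) < H (n+1+j)) with hB
  have hsub : ((Finset.Icc 1 N).filter (fun n : ℕ =>
        (s (⌊α*(n:ℝ) + α*r + β⌋).toNat : ℤ) - (s (⌊α*(n:ℝ) + β⌋).toNat : ℤ) ≠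
        (sl lam (⌊α*(n:ℝ) + α*r + β⌋).toNat : ℤ) - (sl lam (⌊α*(n:ℝ) + β⌋).toNat : ℤ)))
      ⊆ (Finset.range r).biUnion B := by
    intro n hn
    rw [Finset.mem_filter] at hn
    obtain ⟨hn1, hn2⟩ := hn
    have hfe : ⌊α*(n:ℝ) + α*r + β⌋ = ⌊α*((n+r : ℕ):ℝ) + β⌋ := by
      congr 1; push_cast; ring
    have hne : H (n + r) ≠ H n := by
      intro heq
      apply hn2
      have h1 := s_split lam (⌊α*(n:ℝ) + α*(r:ℕ) + β⌋).toNat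
      have h2 := s_split lam (⌊α*(n:ℝ) + β⌋).toNat
      have hHr : H (n + r) = (⌊α*(n:ℝ) + α*(r:ℕ) + β⌋).toNat / 2^lam := by
        show (⌊α*((n+r : ℕ):ℝ) + β⌋).toNat / 2^lam = _
        rw [← hfe]
      have hHn : H n = (⌊α*(n:ℝ) + β⌋).toNat / 2^lam := rfl
      rw [hHr, hHn] at heq
      rw [heq] at h1
      omega
    rw [Finset.mem_biUnion]
    by_contra hc
    push_neg at hc
    have hc' : ∀ j, j < r → H (n+1+j) ≤ H (n+j) := by
      intro j hj
      have := hc j (Finset.mem_range.mpr hj)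
      rw [hB] at this
      simp only [Finset.mem_filter, not_and, not_lt] at this
      exact this hn1
    have hall : ∀ k, k ≤ r → H (n + k) ≤ H n := by
      intro k hk
      induction k with
      | zero => simp
      | succ k ih =>
        have e : n + (k+1) = n + 1 + k := by omega
        rw [e]
        exact le_trans (hc' k (by omega)) (ih (by omega))
    exact hne (le_antisymm (hall r le_rfl) (Hmono (by omega)))
  -- per-step counting
  have hcount : ∀ j : ℕ, ((B j).card : ℝ) ≤ α*N/2^lam + 2 := by
    intro j
    have hz : ((B j).card : ℤ) ≤ (H (N+1+j) : ℤ) - H (1+j) := by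
      have hcf : ((B j).card : ℤ)
          = ∑ n ∈ Finset.Icc 1 N, (if H (n+j) < H (n+1+j) then (1:ℤ) else 0) := by
        rw [hB, Finset.card_filter]; push_cast; rfl
      rw [hcf]
      have hle : ∑ n ∈ Finset.Icc 1 N, (if H (n+j) < H (n+1+j) then (1:ℤ) else 0)
          ≤ ∑ n ∈ Finset.Icc 1 N, ((H (n+1+j) : ℤ) - H (n+j)) := by
        apply Finset.sum_le_sum
        intro n _
        by_cases h : H (n+j) < H (n+1+j)
        · simp only [h, if_true]; omega
        · simp only [h, if_false]
          have : H (n+j) ≤ H (n+1+j) := Hmono (by omega)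
          omega
      refine hle.trans ?_
      have htel : ∑ n ∈ Finset.Icc 1 N, ((H (n+1+j) : ℤ) - H (n+j))
          = (H (N+1+j) : ℤ) - H (1+j) := by
        rw [← Finset.Ico_add_one_right_eq_Icc, Finset.sum_Ico_eq_sum_range]
        have := Finset.sum_range_sub (fun t => (H (1+t+j) : ℤ)) N
        calc ∑ i ∈ Finset.range N, ((H (1+i+1+j) : ℤ) - H (1+i+j))
            = (H (1+N+j) : ℤ) - H (1+0+j) := this
        _ = (H (N+1+j) : ℤ) - H (1+j) := by
              have e1 : 1+N+j = N+1+j := by omega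
              have e2 : 1+0+j = 1+j := by omega
              rw [e1, e2]
      rw [htel]
    have hzz : ((B j).card : ℝ) ≤ (H (N+1+j) : ℝ) - H (1+j) := by exact_mod_cast hz
    refine hzz.trans ?_
    have h1 := Hub (N+1+j)
    have h2 := Hlb (1+j)
    have hcast1 : ((N+1+j : ℕ):ℝ) = (N:ℝ) + 1 + j := by push_cast; ring
    have hcast2 : ((1+j : ℕ):ℝ) = 1 + (j:ℝ) := by push_cast; ring
    rw [hcast1] at h1
    rw [hcast2] at h2
    have hexp : (α*((N:ℝ)+1+j) + β)/2^lam - ((α*(1+(j:ℝ)) + β)/2^lam - 1)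
        = α*N/2^lam + 1 := by
      field_simp
      ring
    have : (H (N+1+j) : ℝ) - H (1+j) ≤ α*N/2^lam + 1 := by linarith
    linarith
  -- assemble
  calc (((Finset.Icc 1 N).filter (fun n : ℕ =>
        (s (⌊α*(n:ℝ) + α*r + β⌋).toNat : ℤ) - (s (⌊α*(n:ℝ) + β⌋).toNat : ℤ) ≠
        (sl lam (⌊α*(n:ℝ) + α*r + β⌋).toNat : ℤ) - (sl lam (⌊α*(n:ℝ) + β⌋).toNat : ℤ))).card : ℝ)
      ≤ (((Finset.range r).biUnion B).card : ℝ) := by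
        exact_mod_cast Finset.card_le_card hsub
    _ ≤ ∑ j ∈ Finset.range r, ((B j).card : ℝ) := by
        exact_mod_cast Finset.card_biUnion_le
    _ ≤ ∑ j ∈ Finset.range r, (α*N/2^lam + 2) := Finset.sum_le_sum (fun j _ => hcount j)
    _ = r * (α*N/2^lam + 2) := by rw [Finset.sum_const, Finset.card_range]; ring
end

section
/- Let D, N, t be real numbers with D, N > 10 and D·|t| ≥ N^{−1}. Then ∫_D^{2D} |∑_{n≤N} e(αtn)| dα ≪ max(D·log N, 1/|t|), with an absolute implied constant. -/
open MeasureTheory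

noncomputable def e (x : ℝ) : ℂ := Complex.exp (2 * Real.pi * Complex.I * x)

open Real Finset intervalIntegral

lemma e_eq (x : ℝ) : e x = Complex.exp (((2 * π * x : ℝ) : ℂ) * Complex.I) := by
  unfold e; congr 1; push_cast; ring

lemma norm_e (x : ℝ) : ‖e x‖ = 1 := by
  rw [e_eq, Complex.norm_exp]
  simp

lemma norm_e_sub_one (x : ℝ) : ‖e x - 1‖ = 2 * |Real.sin (π * x)| := by
  rw [e_eq, Complex.exp_mul_I]
  have h1 : Complex.cos ((2 * π * x : ℝ) : ℂ) + Complex.sin ((2 * π * x : ℝ) : ℂ) * Complex.I - 1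
      = ((Real.cos (2 * π * x) - 1 : ℝ) : ℂ) + ((Real.sin (2 * π * x) : ℝ) : ℂ) * Complex.I := by
    push_cast [Complex.ofReal_cos, Complex.ofReal_sin]
    ring
  rw [h1, Complex.norm_add_mul_I]
  have h2 : |Real.sin (π * x)| = Real.sqrt ((1 - Real.cos (2 * π * x)) / 2) := by
    have := Real.abs_sin_half (2 * π * x)
    rw [show 2 * π * x / 2 = π * x by ring] at this
    exact this
  rw [h2]
  have h3 : (Real.cos (2*π*x) - 1)^2 + Real.sin (2*π*x)^2
      = 2^2 * ((1 - Real.cos (2*π*x))/2) := by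
    nlinarith [Real.sin_sq_add_cos_sq (2 * π * x)]
  rw [h3, Real.sqrt_mul (by norm_num : (0:ℝ) ≤ 2^2), Real.sqrt_sq (by norm_num : (0:ℝ) ≤ 2)]

lemma sum_e_le (M : ℕ) {x : ℝ} (hs : Real.sin (π * x) ≠ 0) :
    ‖∑ n ∈ Finset.Icc 1 M, e (x * n)‖ ≤ 1 / |Real.sin (π * x)| := by
  have hz1 : e x ≠ 1 := by
    intro h
    apply hs
    have h2 := norm_e_sub_one x
    rw [h, sub_self, norm_zero] at h2
    have h3 : |Real.sin (π * x)| = 0 := by linarith [abs_nonneg (Real.sin (π * x))]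
    exact abs_eq_zero.mp h3
  have hpow : ∀ n : ℕ, e (x * n) = (e x) ^ n := by
    intro n
    rw [e_eq, e_eq, ← Complex.exp_nat_mul]
    congr 1
    push_cast
    ring
  have hsum : ∑ n ∈ Finset.Icc 1 M, e (x * n)
      = ((e x) ^ (M + 1) - 1) / (e x - 1) - 1 := by
    rw [← geom_sum_eq hz1 (M + 1)]
    simp_rw [hpow]
    have hins : Finset.Icc 0 M = insert 0 (Finset.Icc 1 M) := by
      rw [show Finset.Icc 1 M = Finset.Ioc 0 M from Finset.Icc_add_one_left_eq_Ioc 0 M]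
      exact (Finset.Ioc_insert_left (Nat.zero_le M)).symm
    rw [Finset.range_eq_Ico, Finset.Ico_add_one_right_eq_Icc, hins, Finset.sum_insert (by simp), pow_zero]
    ring
  rw [hsum]
  have hne : e x - 1 ≠ 0 := sub_ne_zero.mpr hz1
  have heq : ((e x) ^ (M + 1) - 1) / (e x - 1) - 1
      = ((e x) ^ (M + 1) - e x) / (e x - 1) := by
    field_simp
    ring
  rw [heq, norm_div]
  have hnum : ‖(e x) ^ (M + 1) - e x‖ ≤ 2 := by
    calc ‖(e x) ^ (M + 1) - e x‖ ≤ ‖(e x) ^ (M + 1)‖ + ‖e x‖ := norm_sub_le _ _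
    _ = 1 + 1 := by rw [norm_pow, norm_e]; norm_num
    _ = 2 := by norm_num
  rw [norm_e_sub_one]
  rw [div_le_div_iff₀ (by positivity) (by positivity)]
  nlinarith [abs_nonneg (Real.sin (π * x))]

lemma sum_e_le_card (M : ℕ) (x : ℝ) :
    ‖∑ n ∈ Finset.Icc 1 M, e (x * n)‖ ≤ M := by
  calc ‖∑ n ∈ Finset.Icc 1 M, e (x * n)‖ ≤ ∑ n ∈ Finset.Icc 1 M, ‖e (x * n)‖ :=
        norm_sum_le _ _
  _ = ∑ n ∈ Finset.Icc 1 M, (1:ℝ) := Finset.sum_congr rfl fun n _ => norm_e _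
  _ = M := by simp

lemma middle_bound (M : ℕ) {β : ℝ} (h0 : 0 < β) (h1 : β < 1) :
    ‖∑ n ∈ Finset.Icc 1 M, e (β * n)‖ ≤ 1 / (2 * β) + 1 / (2 * (1 - β)) := by
  have hπ := Real.pi_pos
  have hsin : 0 < Real.sin (π * β) :=
    Real.sin_pos_of_pos_of_lt_pi (by nlinarith) (by nlinarith)
  refine (sum_e_le M hsin.ne').trans ?_
  rw [abs_of_pos hsin]
  rcases le_or_gt β (1/2) with h | h
  · have hsb : 2 * β ≤ Real.sin (π * β) := by
      have := Real.mul_le_sin (x := π * β) (by nlinarith) (by nlinarith)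
      calc 2 * β = 2 / π * (π * β) := by field_simp
      _ ≤ Real.sin (π * β) := this
    have : 1 / Real.sin (π * β) ≤ 1 / (2 * β) :=
      one_div_le_one_div_of_le (by nlinarith) hsb
    have hp : (0:ℝ) ≤ 1 / (2 * (1 - β)) := (div_pos one_pos (by nlinarith)).le
    linarith
  · have hsb : 2 * (1 - β) ≤ Real.sin (π * β) := by
      have heq : Real.sin (π * β) = Real.sin (π * (1 - β)) := by
        rw [← Real.sin_pi_sub]; congr 1; ring
      rw [heq]
      have := Real.mul_le_sin (x := π * (1 - β)) (by nlinarith) (by nlinarith)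
      calc 2 * (1 - β) = 2 / π * (π * (1 - β)) := by field_simp
      _ ≤ Real.sin (π * (1 - β)) := this
    have : 1 / Real.sin (π * β) ≤ 1 / (2 * (1 - β)) :=
      one_div_le_one_div_of_le (by nlinarith) hsb
    have hp : (0:ℝ) ≤ 1 / (2 * β) := (div_pos one_pos (by nlinarith)).le
    linarith

lemma continuous_hsum (M : ℕ) :
    Continuous (fun β : ℝ => ‖∑ n ∈ Finset.Icc 1 M, e (β * n)‖) := by
  have : Continuous fun β : ℝ => ∑ n ∈ Finset.Icc 1 M, e (β * n) := by
    refine continuous_finset_sum _ fun n _ => ?_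
    unfold e
    exact Complex.continuous_exp.comp
      (continuous_const.mul (Complex.continuous_ofReal.comp (continuous_mul_right _)))
  exact this.norm

lemma periodic_hsum (M : ℕ) :
    Function.Periodic (fun β : ℝ => ‖∑ n ∈ Finset.Icc 1 M, e (β * n)‖) 1 := by
  intro β
  have hsum : ∑ n ∈ Finset.Icc 1 M, e ((β + 1) * n) = ∑ n ∈ Finset.Icc 1 M, e (β * n) := by
    refine Finset.sum_congr rfl fun n _ => ?_
    rw [e_eq, e_eq]
    rw [show (((2 * π * ((β + 1) * n) : ℝ)) : ℂ) * Complex.I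
        = ((2 * π * (β * n) : ℝ) : ℂ) * Complex.I + (n : ℂ) * (2 * π * Complex.I) by
      push_cast; ring]
    rw [Complex.exp_add, Complex.exp_nat_mul_two_pi_mul_I, mul_one]
  exact congrArg Norm.norm hsum

lemma log_ge_two {N : ℝ} (hN : 10 < N) : 2 ≤ Real.log N := by
  have h1 : Real.exp 1 < 2.7182818286 := Real.exp_one_lt_d9
  have h2 : Real.exp 2 = Real.exp 1 * Real.exp 1 := by rw [← Real.exp_add]; norm_num
  have h3 : Real.exp 2 < 10 := by nlinarith [Real.exp_pos 1]
  calc (2:ℝ) = Real.log (Real.exp 2) := (Real.log_exp 2).symm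
  _ ≤ Real.log N := Real.log_le_log (Real.exp_pos 2) (by linarith)

set_option maxHeartbeats 2000000 in
lemma main_pos (D N t : ℝ) (hD : 10 < D) (hN : 10 < N) (htpos : 0 < t)
    (ht : N⁻¹ ≤ D * t) :
    ∫ α in D..(2*D), ‖∑ n ∈ Finset.Icc 1 ⌊N⌋₊, e (α * t * (n:ℝ))‖ ≤
      8 * max (D * Real.log N) (1/t) := by
  set M := ⌊N⌋₊ with hM
  set h : ℝ → ℝ := fun β => ‖∑ n ∈ Finset.Icc 1 M, e (β * n)‖ with hh
  have hcont : Continuous h := continuous_hsum M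
  have hint : ∀ a b : ℝ, IntervalIntegrable h volume a b :=
    fun a b => hcont.intervalIntegrable a b
  have hper : Function.Periodic h 1 := periodic_hsum M
  have hnonneg : ∀ β, 0 ≤ h β := fun β => norm_nonneg _
  have hNpos : (0:ℝ) < N := by linarith
  have hhle : ∀ β, h β ≤ N := by
    intro β
    exact (sum_e_le_card M β).trans (Nat.floor_le hNpos.le)
  have hfun : (fun α => ‖∑ n ∈ Finset.Icc 1 M, e (α * t * (n:ℝ))‖)
      = fun α => h (t * α) := by
    funext α
    simp only [hh]
    congr 1
    exact Finset.sum_congr rfl fun n _ => by rw [mul_comm α t]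
  have hL : 0 ≤ Real.log N := by linarith [log_ge_two hN]
  rw [show (∫ α in D..(2*D), ‖∑ n ∈ Finset.Icc 1 M, e (α * t * (n:ℝ))‖)
      = ∫ α in D..(2*D), h (t * α) by rw [hfun]]
  rcases le_or_gt (3/8 : ℝ) (t * D) with hcase | hcase
  · -- Case A
    rw [intervalIntegral.integral_comp_mul_left h htpos.ne', smul_eq_mul]
    set n : ℕ := ⌈t * D⌉₊ with hn
    have hn1 : t * D ≤ n := Nat.le_ceil _
    have hn2 : (n:ℝ) < t * D + 1 := Nat.ceil_lt_add_one (by nlinarith)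
    have key1 : ∫ β in t*D..t*(2*D), h β ≤ ∫ β in t*D..(t*D + (n:ℤ) • (1:ℝ)), h β := by
      have hDpos : (0:ℝ) < D := by linarith
      have htD : 0 < t * D := mul_pos htpos hDpos
      apply intervalIntegral.integral_mono_interval le_rfl (by nlinarith)
        (by simp only [zsmul_eq_mul, mul_one, Int.cast_natCast]; nlinarith)
        (Filter.Eventually.of_forall hnonneg) (hint _ _)
    have key2 : ∫ β in t*D..(t*D + (n:ℤ) • (1:ℝ)), h β = n * ∫ β in (0:ℝ)..1, h β := by
      rw [hper.intervalIntegral_add_zsmul_eq n (t*D) hint,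
        hper.intervalIntegral_add_eq (t*D) 0]
      simp [zsmul_eq_mul]
    have hint01 : ∫ β in (0:ℝ)..1, h β ≤ 2 * Real.log N := by
      set δ : ℝ := 1/N with hδ
      have hδpos : 0 < δ := by positivity
      have hδlt : δ < 1/10 := by rw [hδ]; rw [div_lt_div_iff₀ hNpos (by norm_num)]; linarith
      have hsplit : ∫ β in (0:ℝ)..1, h β
          = (∫ β in (0:ℝ)..δ, h β) + ((∫ β in δ..(1-δ), h β) + ∫ β in (1-δ)..1, h β) := by
        rw [intervalIntegral.integral_add_adjacent_intervals (hint δ (1-δ)) (hint (1-δ) 1),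
          intervalIntegral.integral_add_adjacent_intervals (hint 0 δ) (hint δ 1)]
      have hb1 : ∫ β in (0:ℝ)..δ, h β ≤ 1 := by
        have := intervalIntegral.norm_integral_le_of_norm_le_const (C := N)
          (f := h) (a := 0) (b := δ) (fun x _ => by
            rw [Real.norm_eq_abs, abs_of_nonneg (hnonneg x)]; exact hhle x)
        calc ∫ β in (0:ℝ)..δ, h β ≤ ‖∫ β in (0:ℝ)..δ, h β‖ := le_abs_self _
        _ ≤ N * |δ - 0| := this
        _ = 1 := by rw [sub_zero, abs_of_pos hδpos, hδ]; field_simp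
      have hb3 : ∫ β in (1-δ)..1, h β ≤ 1 := by
        have := intervalIntegral.norm_integral_le_of_norm_le_const (C := N)
          (f := h) (a := 1-δ) (b := 1) (fun x _ => by
            rw [Real.norm_eq_abs, abs_of_nonneg (hnonneg x)]; exact hhle x)
        calc ∫ β in (1-δ)..1, h β ≤ ‖∫ β in (1-δ)..1, h β‖ := le_abs_self _
        _ ≤ N * |1 - (1-δ)| := this
        _ = 1 := by rw [show (1:ℝ) - (1-δ) = δ by ring, abs_of_pos hδpos, hδ]; field_simp
      have hb2 : ∫ β in δ..(1-δ), h β ≤ Real.log N := by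
        have hmono : ∫ β in δ..(1-δ), h β
            ≤ ∫ β in δ..(1-δ), (1/(2*β) + 1/(2*(1-β))) := by
          apply intervalIntegral.integral_mono_on (by linarith) (hint _ _)
          · apply ContinuousOn.intervalIntegrable
            apply ContinuousOn.add
            · apply ContinuousOn.div continuousOn_const
              · fun_prop
              · intro x hx
                rw [Set.uIcc_of_le (by linarith)] at hx
                have := hx.1; nlinarith
            · apply ContinuousOn.div continuousOn_const
              · fun_prop
              · intro x hx
                rw [Set.uIcc_of_le (by linarith)] at hx
                have := hx.2; nlinarith
          · intro x hx
            exact middle_bound M (by linarith [hx.1]) (by linarith [hx.2])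
        have hI1 : ∫ β in δ..(1-δ), 1/(2*β) = (1/2) * Real.log ((1-δ)/δ) := by
          have : ∀ β : ℝ, 1/(2*β) = (1/2) * β⁻¹ := fun β => by
            rcases eq_or_ne β 0 with rfl | hβ
            · simp
            · field_simp
          simp_rw [this]
          rw [intervalIntegral.integral_const_mul, integral_inv (by
            rw [Set.uIcc_of_le (by linarith)]
            intro hmem
            exact absurd hmem.1 (by norm_num; linarith))]
        have hI2 : ∫ β in δ..(1-δ), 1/(2*(1-β)) = (1/2) * Real.log ((1-δ)/δ) := by
          have := intervalIntegral.integral_comp_sub_left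
            (f := fun u : ℝ => 1/(2*u)) (a := δ) (b := 1-δ) 1
          rw [show (1:ℝ) - (1-δ) = δ by ring] at this
          rw [show (fun β : ℝ => 1/(2*(1-β))) = (fun β : ℝ => (fun u : ℝ => 1/(2*u)) (1 - β))
            from rfl] at *
          rw [this, ← hI1]
        have hadd : ∫ β in δ..(1-δ), (1/(2*β) + 1/(2*(1-β)))
            = (∫ β in δ..(1-δ), 1/(2*β)) + ∫ β in δ..(1-δ), 1/(2*(1-β)) := by
          apply intervalIntegral.integral_add
          · apply ContinuousOn.intervalIntegrable
            apply ContinuousOn.div continuousOn_const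
            · fun_prop
            · intro x hx
              rw [Set.uIcc_of_le (by linarith)] at hx
              have := hx.1; nlinarith
          · apply ContinuousOn.intervalIntegrable
            apply ContinuousOn.div continuousOn_const
            · fun_prop
            · intro x hx
              rw [Set.uIcc_of_le (by linarith)] at hx
              have := hx.2; nlinarith
        have hlog : Real.log ((1-δ)/δ) ≤ Real.log N := by
          apply Real.log_le_log (div_pos (by linarith) hδpos)
          rw [div_le_iff₀ hδpos]
          have hmul : δ * N = 1 := by rw [hδ]; field_simp
          nlinarith
        calc ∫ β in δ..(1-δ), h β ≤ ∫ β in δ..(1-δ), (1/(2*β) + 1/(2*(1-β))) := hmono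
        _ = (1/2) * Real.log ((1-δ)/δ) + (1/2) * Real.log ((1-δ)/δ) := by
          rw [hadd, hI1, hI2]
        _ ≤ Real.log N := by linarith
      rw [hsplit]
      linarith [log_ge_two hN]
    have hn0 : (0:ℝ) ≤ n := Nat.cast_nonneg n
    have h01 : 0 ≤ ∫ β in (0:ℝ)..1, h β :=
      intervalIntegral.integral_nonneg (by norm_num) (fun x _ => hnonneg x)
    have keyA : ∫ β in t*D..t*(2*D), h β ≤ (t*D + 1) * (2 * Real.log N) := by
      calc ∫ β in t*D..t*(2*D), h β ≤ n * ∫ β in (0:ℝ)..1, h β := key2 ▸ key1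
      _ ≤ (t*D + 1) * (2 * Real.log N) := by
        apply mul_le_mul (le_of_lt hn2) hint01 h01 (by nlinarith)
    have hfin : t⁻¹ * ∫ β in t*D..t*(2*D), h β ≤ 8 * (D * Real.log N) := by
      have h1 : t⁻¹ * ∫ β in t*D..t*(2*D), h β ≤ t⁻¹ * ((t*D + 1) * (2 * Real.log N)) := by
        apply mul_le_mul_of_nonneg_left keyA (by positivity)
      refine h1.trans ?_
      rw [inv_mul_le_iff₀ htpos]
      have hL2 := log_ge_two hN
      nlinarith
    exact hfin.trans (by
      have : D * Real.log N ≤ max (D * Real.log N) (1/t) := le_max_left _ _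
      nlinarith)
  · -- Case B
    have htD : 0 < t * D := by positivity
    have hbound : ∀ α ∈ Set.uIoc D (2*D), ‖h (t * α)‖ ≤ 1/(2*(t*D)) + 2 := by
      intro α hα
      rw [Set.uIoc_of_le (by linarith)] at hα
      have hα1 : D < α := hα.1
      have hα2 : α ≤ 2*D := hα.2
      have hβ1 : t * D < t * α := by nlinarith
      have hβ2 : t * α ≤ 2 * (t * D) := by nlinarith
      have hβpos : 0 < t * α := by nlinarith
      have hβlt : t * α < 3/4 := by nlinarith
      rw [Real.norm_eq_abs, abs_of_nonneg (hnonneg _)]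
      have := middle_bound M (β := t * α) hβpos (by linarith)
      have ht1 : 1/(2*(t*α)) ≤ 1/(2*(t*D)) :=
        one_div_le_one_div_of_le (by positivity) (by nlinarith)
      have ht2 : 1/(2*(1 - t*α)) ≤ 2 := by
        rw [div_le_iff₀ (by nlinarith)]
        nlinarith
      exact this.trans (by linarith)
    have hnorm := intervalIntegral.norm_integral_le_of_norm_le_const hbound
    have habs : |2*D - D| = D := by rw [show 2*D - D = D by ring, abs_of_pos (by linarith)]
    calc ∫ α in D..(2*D), h (t * α) ≤ ‖∫ α in D..(2*D), h (t * α)‖ := le_abs_self _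
    _ ≤ (1/(2*(t*D)) + 2) * |2*D - D| := hnorm
    _ = (1/(2*(t*D)) + 2) * D := by rw [habs]
    _ ≤ 8 * (1/t) := by
      have h1 : 1/(2*(t*D)) * D = 1/(2*t) := by field_simp
      have h2 : 2 * D ≤ (3/4) / t := by
        rw [le_div_iff₀ htpos]; nlinarith
      have h3 : (1/(2*t)) + (3/4)/t ≤ 8 * (1/t) := by
        have he : 1/(2*t) + (3/4)/t = (5/4) * (1/t) := by field_simp; ring
        have hp : (0:ℝ) < 1/t := by positivity
        rw [he]; nlinarith
      nlinarith [h1, h2, h3]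
    _ ≤ 8 * max (D * Real.log N) (1/t) := by
      have : 1/t ≤ max (D * Real.log N) (1/t) := le_max_right _ _
      linarith

theorem stmt6 : ∃ C : ℝ, 0 < C ∧ ∀ D N t : ℝ, 10 < D → 10 < N → N⁻¹ ≤ D * |t| →
    ∫ α in D..(2*D), ‖∑ n ∈ Finset.Icc 1 ⌊N⌋₊, e (α * t * (n:ℝ))‖ ≤
      C * max (D * Real.log N) (1/|t|) := by
  refine ⟨8, by norm_num, fun D N t hD hN ht => ?_⟩
  have hNpos : (0:ℝ) < N := by linarith
  have ht0 : t ≠ 0 := by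
    intro h
    rw [h, abs_zero, mul_zero] at ht
    have : (0:ℝ) < N⁻¹ := by positivity
    linarith
  rcases lt_or_gt_of_ne ht0 with htneg | htpos
  · have habs : |t| = -t := abs_of_neg htneg
    have hconj : ∀ α : ℝ, ‖∑ n ∈ Finset.Icc 1 ⌊N⌋₊, e (α * t * (n:ℝ))‖
        = ‖∑ n ∈ Finset.Icc 1 ⌊N⌋₊, e (α * (-t) * (n:ℝ))‖ := by
      intro α
      have : ∑ n ∈ Finset.Icc 1 ⌊N⌋₊, e (α * (-t) * (n:ℝ))
          = (starRingEnd ℂ) (∑ n ∈ Finset.Icc 1 ⌊N⌋₊, e (α * t * (n:ℝ))) := by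
        rw [map_sum]
        refine Finset.sum_congr rfl fun n _ => ?_
        rw [e_eq, e_eq, ← Complex.exp_conj]
        congr 1
        rw [map_mul, Complex.conj_I, Complex.conj_ofReal]
        push_cast
        ring
      rw [this, RCLike.norm_conj]
    have heq : (∫ α in D..(2*D), ‖∑ n ∈ Finset.Icc 1 ⌊N⌋₊, e (α * t * (n:ℝ))‖)
        = ∫ α in D..(2*D), ‖∑ n ∈ Finset.Icc 1 ⌊N⌋₊, e (α * (-t) * (n:ℝ))‖ := by
      apply intervalIntegral.integral_congr
      intro α _
      exact hconj α
    rw [heq, habs]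
    exact main_pos D N (-t) hD hN (by linarith) (by rw [habs] at ht; exact ht)
  · have habs : |t| = t := abs_of_pos htpos
    rw [habs]
    exact main_pos D N t hD hN htpos (by rw [habs] at ht; exact ht)
end

section
/- Let a < b be integers, K = b − a, and let f : [a,b] → ℝ be twice differentiable with |f''| ≤ B on [a,b]. Then for every α ∈ f'([a,b]), #{n ∈ (a,b] ∩ ℤ : ⌊f(n)⌋ ≠ ⌊αn + f(a) − αa⌋} ≤ 2BK³ + K·D_K(αn), where D_K(αn) is the discrepancy modulo 1 of the sequence (αn)_{n≤K}. -/
-- fract of a sum equals fract of sum of fracts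
lemma fract_add_fract' (x y : ℝ) :
    Int.fract (Int.fract x + Int.fract y) = Int.fract (x + y) := by
  apply Int.fract_eq_fract.mpr
  refine ⟨-(⌊x⌋ + ⌊y⌋), ?_⟩
  rw [Int.fract, Int.fract]
  push_cast
  ring

-- floor perturbation lemma
lemma floor_fract_lemma (L δ E : ℝ) (hδ : |δ| ≤ E) (hE : 2*E ≤ 1)
    (hne : ⌊L + δ⌋ ≠ ⌊L⌋) : Int.fract (L + E) < 2*E := by
  have hE0 : 0 ≤ E := le_trans (abs_nonneg δ) hδ
  have hδ1 : -E ≤ δ := (abs_le.mp hδ).1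
  have hδ2 : δ ≤ E := (abs_le.mp hδ).2
  have hfLd : Int.fract L = L - ⌊L⌋ := rfl
  have hL1 : (⌊L⌋:ℝ) ≤ L := Int.floor_le L
  have hL2 : L < ⌊L⌋ + 1 := Int.lt_floor_add_one L
  rcases lt_or_gt_of_ne hne with h | h
  · -- ⌊L+δ⌋ < ⌊L⌋, so L+δ < ⌊L⌋
    have h1 : L + δ < ⌊L⌋ := by
      have h2 : (⌊L+δ⌋:ℝ) + 1 ≤ ⌊L⌋ := by exact_mod_cast Int.add_one_le_iff.mpr h
      linarith [Int.lt_floor_add_one (L+δ)]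
    have hfl : Int.fract L < E := by rw [hfLd]; linarith
    have hEpos : 0 < E := lt_of_le_of_lt (Int.fract_nonneg L) hfl
    have hfloor : ⌊L + E⌋ = ⌊L⌋ := by
      apply Int.floor_eq_iff.mpr
      constructor
      · linarith
      · push_cast
        rw [hfLd] at hfl
        linarith
    have : Int.fract (L + E) = Int.fract L + E := by
      rw [Int.fract, hfloor, hfLd]; ring
    rw [this]; linarith
  · -- ⌊L⌋ < ⌊L+δ⌋, so ⌊L⌋+1 ≤ L+δ
    have h1 : (⌊L⌋:ℝ) + 1 ≤ L + δ := by
      have h2 : (⌊L⌋:ℝ) + 1 ≤ ⌊L+δ⌋ := by exact_mod_cast Int.add_one_le_iff.mpr h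
      linarith [Int.floor_le (L+δ)]
    have hEpos : 0 < E := by linarith
    have hfloor : ⌊L + E⌋ = ⌊L⌋ + 1 := by
      apply Int.floor_eq_iff.mpr
      constructor
      · push_cast; linarith
      · push_cast; linarith
    have : Int.fract (L + E) = L + E - (⌊L⌋ + 1) := by
      rw [Int.fract, hfloor]; push_cast; ring
    rw [this]; linarith

theorem stmt9 (a b : ℤ) (hab : a < b) (K : ℕ) (hK : (K:ℤ) = b - a)
    (f f' f'' : ℝ → ℝ) (B : ℝ)
    (hf : ∀ x ∈ Set.Icc (a:ℝ) (b:ℝ), HasDerivAt f (f' x) x)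
    (hf' : ∀ x ∈ Set.Icc (a:ℝ) (b:ℝ), HasDerivAt f' (f'' x) x)
    (hB : ∀ x ∈ Set.Icc (a:ℝ) (b:ℝ), |f'' x| ≤ B)
    (α : ℝ) (hα : α ∈ f' '' Set.Icc (a:ℝ) (b:ℝ))
    (D : ℝ)
    (hD : ∀ u v : ℝ, 0 ≤ u → u ≤ v → v ≤ 1 →
      |(((Finset.Icc 1 K).filter (fun n : ℕ =>
          u ≤ Int.fract (α*(n:ℝ)) ∧ Int.fract (α*(n:ℝ)) < v)).card : ℝ)/K - (v-u)| ≤ D) :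
    (((Finset.Ioc a b).filter (fun n : ℤ =>
        ⌊f (n:ℝ)⌋ ≠ ⌊α*(n:ℝ) + f (a:ℝ) - α*(a:ℝ)⌋)).card : ℝ)
      ≤ 2*B*(K:ℝ)^3 + (K:ℝ)*D := by
  have hab' : (a:ℝ) < b := by exact_mod_cast hab
  have hKr : (K:ℝ) = (b:ℝ) - a := by exact_mod_cast hK
  have hK0 : 0 < K := by omega
  have hKr0 : (0:ℝ) < K := by exact_mod_cast hK0
  have haIcc : (a:ℝ) ∈ Set.Icc (a:ℝ) (b:ℝ) := ⟨le_refl _, hab'.le⟩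
  have hB0 : 0 ≤ B := le_trans (abs_nonneg _) (hB a haIcc)
  have hD0 : 0 ≤ D := by
    have h := hD 0 0 le_rfl le_rfl zero_le_one
    have he : ((Finset.Icc 1 K).filter (fun n : ℕ =>
        (0:ℝ) ≤ Int.fract (α*(n:ℝ)) ∧ Int.fract (α*(n:ℝ)) < 0)).card = 0 := by
      apply Finset.card_eq_zero.mpr
      apply Finset.filter_eq_empty_iff.mpr
      intro n _ hc
      exact absurd hc.2 (not_lt.mpr hc.1)
    rw [he] at h
    simpa using h
  have hcard_le : ((Finset.Ioc a b).filter (fun n : ℤ =>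
      ⌊f (n:ℝ)⌋ ≠ ⌊α*(n:ℝ) + f (a:ℝ) - α*(a:ℝ)⌋)).card ≤ K := by
    refine le_trans (Finset.card_filter_le _ _) ?_
    rw [Int.card_Ioc]
    omega
  by_cases hbig : 1 ≤ 2*B*(K:ℝ)^2
  · calc (((Finset.Ioc a b).filter (fun n : ℤ =>
        ⌊f (n:ℝ)⌋ ≠ ⌊α*(n:ℝ) + f (a:ℝ) - α*(a:ℝ)⌋)).card : ℝ) ≤ K := by exact_mod_cast hcard_le
    _ ≤ 2*B*(K:ℝ)^3 + (K:ℝ)*D := by nlinarith [mul_le_mul_of_nonneg_right hbig hKr0.le, mul_nonneg (le_of_lt hKr0) hD0]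
  push_neg at hbig
  set E : ℝ := B*(K:ℝ)^2 with hE
  have hE0 : 0 ≤ E := by positivity
  have h2E : 2*E ≤ 1 := by linarith
  -- derivative bound
  obtain ⟨x₀, hx₀, hfx₀⟩ := hα
  have key1 : ∀ x ∈ Set.Icc (a:ℝ) (b:ℝ), |f' x - α| ≤ B * K := by
    intro x hx
    have h := Convex.norm_image_sub_le_of_norm_hasDerivWithin_le
      (f := f') (f' := f'') (C := B) (s := Set.Icc (a:ℝ) (b:ℝ))
      (fun y hy => (hf' y hy).hasDerivWithinAt)
      (fun y hy => by rw [Real.norm_eq_abs]; exact hB y hy)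
      (convex_Icc _ _) hx₀ hx
    rw [Real.norm_eq_abs, Real.norm_eq_abs, hfx₀] at h
    have hxx : |x - x₀| ≤ (K:ℝ) := by
      rw [abs_le]
      constructor
      · linarith [hx.1, hx₀.2]
      · linarith [hx.2, hx₀.1]
    nlinarith [abs_nonneg (x - x₀)]
  -- approximation bound
  have key2 : ∀ x ∈ Set.Icc (a:ℝ) (b:ℝ), |f x - (α*x + f (a:ℝ) - α*(a:ℝ))| ≤ E := by
    intro x hx
    have hg : ∀ y ∈ Set.Icc (a:ℝ) (b:ℝ),
        HasDerivWithinAt (fun z => f z - α*z) (f' y - α) (Set.Icc (a:ℝ) (b:ℝ)) y := by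
      intro y hy
      have h1 : HasDerivAt (fun z : ℝ => α*z) α y := by
        simpa using (hasDerivAt_id y).const_mul α
      exact ((hf y hy).sub h1).hasDerivWithinAt
    have h := Convex.norm_image_sub_le_of_norm_hasDerivWithin_le
      (C := B*K) (s := Set.Icc (a:ℝ) (b:ℝ)) hg
      (fun y hy => by rw [Real.norm_eq_abs]; exact key1 y hy)
      (convex_Icc _ _) haIcc hx
    rw [Real.norm_eq_abs, Real.norm_eq_abs] at h
    have hxa : |x - a| ≤ (K:ℝ) := by
      rw [abs_le]
      constructor
      · linarith [hx.1]
      · linarith [hx.2]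
    have he : f x - α*x - (f (a:ℝ) - α*(a:ℝ)) = f x - (α*x + f (a:ℝ) - α*(a:ℝ)) := by ring
    rw [he] at h
    have hBK : 0 ≤ B*(K:ℝ) := by positivity
    calc |f x - (α*x + f (a:ℝ) - α*(a:ℝ))| ≤ B*K * |x - a| := h
    _ ≤ B*K * K := mul_le_mul_of_nonneg_left hxa hBK
    _ = E := by rw [hE]; ring
  set β : ℝ := Int.fract (f (a:ℝ) + E) with hβ
  have hβ0 : 0 ≤ β := Int.fract_nonneg _
  have hβ1 : β < 1 := Int.fract_lt_one _
  -- key membership property of bad n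
  have hbad : ∀ n ∈ (Finset.Ioc a b).filter (fun n : ℤ =>
      ⌊f (n:ℝ)⌋ ≠ ⌊α*(n:ℝ) + f (a:ℝ) - α*(a:ℝ)⌋),
      Int.fract (Int.fract (α*(((n - a).toNat : ℕ):ℝ)) + β) < 2*E := by
    intro n hn
    rw [Finset.mem_filter, Finset.mem_Ioc] at hn
    obtain ⟨⟨hn1, hn2⟩, hne⟩ := hn
    have hnIcc : ((n:ℤ):ℝ) ∈ Set.Icc (a:ℝ) (b:ℝ) := by
      constructor
      · exact_mod_cast hn1.le
      · exact_mod_cast hn2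
    set L : ℝ := α*(n:ℝ) + f (a:ℝ) - α*(a:ℝ) with hL
    have hδ : |f (n:ℝ) - L| ≤ E := key2 _ hnIcc
    have hfl : Int.fract (L + E) < 2*E := by
      apply floor_fract_lemma L (f (n:ℝ) - L) E hδ h2E
      rw [show L + (f (n:ℝ) - L) = f (n:ℝ) by ring]
      exact hne
    have hcast : (((n - a).toNat : ℕ):ℝ) = (n:ℝ) - (a:ℝ) := by
      have h2 : ((n - a).toNat : ℤ) = n - a := Int.toNat_of_nonneg (by omega)
      exact_mod_cast h2
    rw [hcast, hβ, fract_add_fract']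
    rw [show α * ((n:ℝ) - (a:ℝ)) + (f (a:ℝ) + E) = L + E by rw [hL]; ring]
    exact hfl
  -- injection into naturals
  have hinj : Set.InjOn (fun n : ℤ => (n - a).toNat)
      ((Finset.Ioc a b).filter (fun n : ℤ =>
        ⌊f (n:ℝ)⌋ ≠ ⌊α*(n:ℝ) + f (a:ℝ) - α*(a:ℝ)⌋) : Finset ℤ) := by
    intro x hx y hy hxy
    simp only [Finset.coe_filter, Set.mem_setOf_eq, Finset.mem_Ioc] at hx hy
    simp only at hxy
    omega
  set S := (Finset.Ioc a b).filter (fun n : ℤ =>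
      ⌊f (n:ℝ)⌋ ≠ ⌊α*(n:ℝ) + f (a:ℝ) - α*(a:ℝ)⌋) with hS
  have hSmem : ∀ n ∈ S, 1 ≤ (n - a).toNat ∧ (n - a).toNat ≤ K := by
    intro n hn
    rw [hS, Finset.mem_filter, Finset.mem_Ioc] at hn
    omega
  by_cases hcase : 2*E ≤ β
  · -- single interval [1-β, 1-β+2E)
    have hmap : ∀ n ∈ S, (n - a).toNat ∈ (Finset.Icc 1 K).filter (fun m : ℕ =>
        1-β ≤ Int.fract (α*(m:ℝ)) ∧ Int.fract (α*(m:ℝ)) < 1-β+2*E) := by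
      intro n hn
      rw [Finset.mem_filter, Finset.mem_Icc]
      refine ⟨⟨(hSmem n hn).1, (hSmem n hn).2⟩, ?_⟩
      have hb := hbad n hn
      set t := Int.fract (α*(((n - a).toNat : ℕ):ℝ)) with ht
      have ht0 : 0 ≤ t := Int.fract_nonneg _
      have ht1 : t < 1 := Int.fract_lt_one _
      have h1 : 1 ≤ t + β := by
        by_contra h
        push_neg at h
        rw [Int.fract_eq_self.mpr ⟨by linarith, h⟩] at hb
        linarith
      have h2 : Int.fract (t + β) = t + β - 1 := by
        have e1 : Int.fract (t + β - (1:ℤ)) = Int.fract (t + β) := Int.fract_sub_intCast _ _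
        have e2 : Int.fract (t + β - (1:ℤ)) = t + β - 1 := by
          rw [Int.fract_eq_self.mpr ⟨by push_cast; linarith, by push_cast; linarith⟩]
          push_cast; ring
        rw [← e1, e2]
      rw [h2] at hb
      exact ⟨by linarith, by linarith⟩
    have hcle : S.card ≤ ((Finset.Icc 1 K).filter (fun m : ℕ =>
        1-β ≤ Int.fract (α*(m:ℝ)) ∧ Int.fract (α*(m:ℝ)) < 1-β+2*E)).card :=
      Finset.card_le_card_of_injOn _ hmap hinj
    have hd := hD (1-β) (1-β+2*E) (by linarith) (by linarith) (by linarith)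
    have hd2 := (abs_le.mp hd).2
    set c : ℝ := (((Finset.Icc 1 K).filter (fun m : ℕ =>
        1-β ≤ Int.fract (α*(m:ℝ)) ∧ Int.fract (α*(m:ℝ)) < 1-β+2*E)).card : ℝ) with hc
    have hdivc : c / K * K = c := div_mul_cancel₀ c (ne_of_gt hKr0)
    have hcK : c ≤ (2*E + D) * K := by
      nlinarith [mul_le_mul_of_nonneg_right hd2 hKr0.le]
    have : (S.card : ℝ) ≤ c := by rw [hc]; exact_mod_cast hcle
    have hEK : 2*E*(K:ℝ) = 2*B*(K:ℝ)^3 := by rw [hE]; ring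
    have hexp : (2*E + D) * (K:ℝ) = 2*E*(K:ℝ) + (K:ℝ)*D := by ring
    linarith
  · -- wrap-around: bad n avoid [2E-β, 1-β)
    push_neg at hcase
    have hmap : ∀ n ∈ S, (n - a).toNat ∈ (Finset.Icc 1 K).filter (fun m : ℕ =>
        ¬(2*E-β ≤ Int.fract (α*(m:ℝ)) ∧ Int.fract (α*(m:ℝ)) < 1-β)) := by
      intro n hn
      rw [Finset.mem_filter, Finset.mem_Icc]
      refine ⟨⟨(hSmem n hn).1, (hSmem n hn).2⟩, ?_⟩
      have hb := hbad n hn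
      set t := Int.fract (α*(((n - a).toNat : ℕ):ℝ)) with ht
      rintro ⟨h1, h2⟩
      have : Int.fract (t + β) = t + β := Int.fract_eq_self.mpr ⟨by linarith, by linarith⟩
      rw [this] at hb
      linarith
    have hcle : S.card ≤ ((Finset.Icc 1 K).filter (fun m : ℕ =>
        ¬(2*E-β ≤ Int.fract (α*(m:ℝ)) ∧ Int.fract (α*(m:ℝ)) < 1-β))).card :=
      Finset.card_le_card_of_injOn _ hmap hinj
    have hsum : ((Finset.Icc 1 K).filter (fun m : ℕ =>
        2*E-β ≤ Int.fract (α*(m:ℝ)) ∧ Int.fract (α*(m:ℝ)) < 1-β)).card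
        + ((Finset.Icc 1 K).filter (fun m : ℕ =>
        ¬(2*E-β ≤ Int.fract (α*(m:ℝ)) ∧ Int.fract (α*(m:ℝ)) < 1-β))).card
        = K := by
      rw [Finset.card_filter_add_card_filter_not, Nat.card_Icc]
      omega
    have hd := hD (2*E-β) (1-β) (by linarith) (by linarith) (by linarith)
    have hd1 := (abs_le.mp hd).1
    set c : ℝ := (((Finset.Icc 1 K).filter (fun m : ℕ =>
        2*E-β ≤ Int.fract (α*(m:ℝ)) ∧ Int.fract (α*(m:ℝ)) < 1-β)).card : ℝ) with hc
    have hdivc : c / K * K = c := div_mul_cancel₀ c (ne_of_gt hKr0)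
    have hcK : ((1-β)-(2*E-β) - D) * K ≤ c := by
      nlinarith [mul_le_mul_of_nonneg_right hd1 hKr0.le]
    have hS2 : (S.card : ℝ) ≤ (K:ℝ) - c := by
      have h3 : (S.card : ℝ) ≤ (((Finset.Icc 1 K).filter (fun m : ℕ =>
        ¬(2*E-β ≤ Int.fract (α*(m:ℝ)) ∧ Int.fract (α*(m:ℝ)) < 1-β))).card : ℝ) := by
        exact_mod_cast hcle
      have h4 : c + (((Finset.Icc 1 K).filter (fun m : ℕ =>
        ¬(2*E-β ≤ Int.fract (α*(m:ℝ)) ∧ Int.fract (α*(m:ℝ)) < 1-β))).card : ℝ) = K := by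
        rw [hc]; exact_mod_cast hsum
      linarith
    have hEK : 2*E*(K:ℝ) = 2*B*(K:ℝ)^3 := by rw [hE]; ring
    have hexp : ((1-β)-(2*E-β) - D) * (K:ℝ) = (K:ℝ) - 2*E*(K:ℝ) - (K:ℝ)*D := by ring
    linarith
end

section
/- For every integer m ≥ 2 there exist constants η₁ > 0 and C = C(m) > 0 such that for all integers ρ ≥ 0, the discrete Gowers norm satisfies (1/2^{(m+1)ρ})·|∑_{0≤n<2^ρ} ∑_{0≤r₁,…,r_m<2^ρ} e((1/2)·∑_{ε∈{0,1}^m} s_ρ(n + ⟨ε,r⟩))| ≤ C·2^{−η₁ρ}, where s_ρ(n) = s(n mod 2^ρ) is the 2^ρ-periodic truncated binary sum-of-digits function. -/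
/-- The `2^ρ`-periodic truncated binary sum-of-digits function. -/
def srho (ρ n : ℕ) : ℕ := s (n % 2^ρ)

namespace TM

lemma s_def {n : ℕ} (hn : n ≠ 0) : s n = n % 2 + s (n / 2) := by
  unfold s
  rw [Nat.digits_def' (by norm_num : 1 < 2) (Nat.pos_of_ne_zero hn)]
  simp

lemma s_two_mul_add {q u : ℕ} (hu : u < 2) : s (2*q + u) = u + s q := by
  rcases Nat.eq_zero_or_pos (2*q + u) with h | h
  · have hq : q = 0 := by omega
    have hu0 : u = 0 := by omega
    subst hq; subst hu0; simp
  · rw [s_def (by omega)]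
    congr 1
    · omega
    · congr 1; omega

lemma srho_step {ρ q u : ℕ} (hu : u < 2) : srho (ρ+1) (2*q+u) = u + srho ρ q := by
  unfold srho
  have h1 : (2*q+u) % 2^(ρ+1) = 2*(q % 2^ρ) + u := by
    have h2 : q % 2^ρ < 2^ρ := Nat.mod_lt _ (by positivity)
    have h3 : 2*q+u = (2^(ρ+1)) * (q / 2^ρ) + (2*(q % 2^ρ) + u) := by
      have h4 := Nat.div_add_mod q (2^ρ)
      have h5 : (2^(ρ+1)) * (q / 2^ρ) = 2 * ((2^ρ) * (q / 2^ρ)) := by ring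
      omega
    rw [h3, Nat.mul_add_mod]
    exact Nat.mod_eq_of_lt (by rw [pow_succ]; omega)
  rw [h1, s_two_mul_add hu]

def g (ρ x : ℕ) : ℤ := (-1)^(srho ρ x)

lemma g_abs (ρ x : ℕ) : |g ρ x| = 1 := by
  unfold g; rw [abs_pow, abs_neg, abs_one, one_pow]

lemma g_step (ρ A w : ℕ) : g (ρ+1) (2*A + w) = (-1)^(w % 2) * g ρ (A + w/2) := by
  have h : 2*A + w = 2*(A + w/2) + w % 2 := by omega
  rw [h, g, srho_step (Nat.mod_lt _ (by norm_num)), pow_add]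
  rfl

lemma g_zero (x : ℕ) : g 0 x = 1 := by
  unfold g srho
  norm_num [s, Nat.mod_one]

variable (m : ℕ)

def dot (ε : Fin m → Bool) (r : Fin m → ℕ) : ℕ := ∑ j, if ε j then r j else 0

def T (ρ : ℕ) (c : (Fin m → Bool) → ℕ) : ℤ :=
  ∑ n ∈ Finset.range (2^ρ), ∑ r ∈ Fintype.piFinset (fun _ : Fin m => Finset.range (2^ρ)),
    ∏ ε : Fin m → Bool, g ρ (n + dot m ε r + c ε)

def sgn (c : (Fin m → Bool) → ℕ) : ℤ := ∏ ε : Fin m → Bool, (-1 : ℤ)^(c ε)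

def step (c : (Fin m → Bool) → ℕ) (a : ℕ) (b : Fin m → ℕ) : (Fin m → Bool) → ℕ :=
  fun ε => (c ε + a + dot m ε b)/2

lemma sgn_eq (c : (Fin m → Bool) → ℕ) : sgn m c = (-1)^(∑ ε : Fin m → Bool, c ε) :=
  Finset.prod_pow_eq_pow_sum _ _ _

lemma sgn_abs (c : (Fin m → Bool) → ℕ) : |sgn m c| = 1 := by
  rw [sgn_eq, abs_pow, abs_neg, abs_one, one_pow]

lemma dot_zero (ε : Fin m → Bool) : dot m ε (fun _ => 0) = 0 := by
  unfold dot; simp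

lemma dot_add_mul (ε : Fin m → Bool) (p b : Fin m → ℕ) :
    dot m ε (fun j => 2 * p j + b j) = 2 * dot m ε p + dot m ε b := by
  unfold dot
  rw [Finset.mul_sum, ← Finset.sum_add_distrib]
  refine Finset.sum_congr rfl fun j _ => ?_
  by_cases h : ε j <;> simp [h]

lemma dot_le (ε : Fin m → Bool) (b : Fin m → ℕ) (hb : ∀ j, b j ≤ 1) : dot m ε b ≤ m := by
  unfold dot
  calc ∑ j, (if ε j then b j else 0) ≤ ∑ j : Fin m, 1 := by
        refine Finset.sum_le_sum fun j _ => ?_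
        by_cases h : ε j <;> simp [h, hb j]
    _ = m := by simp

lemma sum_eval (j : Fin m) (f : Bool → ℕ) :
    ∑ ε : Fin m → Bool, f (ε j) = 2^(m-1) * (f false + f true) := by
  have h1 : ∀ ε : Fin m → Bool, f (ε j) = ∏ j' : Fin m, (if j' = j then f (ε j') else 1) := by
    intro ε
    rw [Finset.prod_ite_eq' Finset.univ j (fun j' => f (ε j'))]
    simp
  rw [Finset.sum_congr rfl (fun ε _ => h1 ε), ← Fintype.piFinset_univ,
    Finset.sum_prod_piFinset Finset.univ (fun j' t => if j' = j then f t else 1)]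
  have h2 : ∀ j' : Fin m, (∑ t : Bool, (if j' = j then f t else 1)) =
      (if j' = j then f false + f true else 2) := by
    intro j'
    by_cases h : j' = j <;> simp [h, add_comm]
  rw [Finset.prod_congr rfl (fun j' _ => h2 j'), ← Finset.mul_prod_erase _ _ (Finset.mem_univ j)]
  rw [if_pos rfl, Finset.prod_congr rfl (fun x hx => if_neg (Finset.ne_of_mem_erase hx)),
    Finset.prod_const, Finset.card_erase_of_mem (Finset.mem_univ j)]
  simp [mul_comm, Finset.card_univ]

lemma sum_dot (b : Fin m → ℕ) : ∑ ε : Fin m → Bool, dot m ε b = 2^(m-1) * ∑ j, b j := by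
  unfold dot
  rw [Finset.sum_comm, Finset.mul_sum]
  refine Finset.sum_congr rfl fun j _ => ?_
  rw [sum_eval m j (fun t => if t then b j else 0)]
  simp

lemma sum_split (N : ℕ) (f : ℕ → ℤ) :
    ∑ n ∈ Finset.range (2*N), f n = ∑ a ∈ Finset.range 2, ∑ y ∈ Finset.range N, f (2*y + a) := by
  have h : ∑ n ∈ Finset.range (2*N), f n
      = ∑ x ∈ Finset.range 2 ×ˢ Finset.range N, f (2 * x.2 + x.1) := by
    refine Finset.sum_nbij' (fun n => (n % 2, n / 2)) (fun x => 2 * x.2 + x.1) ?_ ?_ ?_ ?_ ?_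
    · intro n hn
      simp only [Finset.mem_range] at hn
      simp only [Finset.mem_product, Finset.mem_range]
      omega
    · intro x hx
      simp only [Finset.mem_product, Finset.mem_range] at hx
      simp only [Finset.mem_range]
      omega
    · intro n _; dsimp only; omega
    · intro x hx
      simp only [Finset.mem_product, Finset.mem_range] at hx
      ext <;> simp <;> omega
    · intro n _
      dsimp only
      congr 1
      omega
  rw [h, Finset.sum_product]

lemma sum_split_pi (N : ℕ) (F : (Fin m → ℕ) → ℤ) :
    ∑ r ∈ Fintype.piFinset (fun _ : Fin m => Finset.range (2*N)), F r
    = ∑ b ∈ Fintype.piFinset (fun _ : Fin m => Finset.range 2),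
        ∑ p ∈ Fintype.piFinset (fun _ : Fin m => Finset.range N), F (fun j => 2 * p j + b j) := by
  have h : ∑ r ∈ Fintype.piFinset (fun _ : Fin m => Finset.range (2*N)), F r
      = ∑ x ∈ (Fintype.piFinset (fun _ : Fin m => Finset.range 2)) ×ˢ
          (Fintype.piFinset (fun _ : Fin m => Finset.range N)), F (fun j => 2 * x.2 j + x.1 j) := by
    refine Finset.sum_nbij' (fun r => (fun j => r j % 2, fun j => r j / 2))
      (fun x => fun j => 2 * x.2 j + x.1 j) ?_ ?_ ?_ ?_ ?_
    · intro r hr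
      simp only [Fintype.mem_piFinset, Finset.mem_range] at hr
      simp only [Finset.mem_product, Fintype.mem_piFinset, Finset.mem_range]
      constructor <;> intro j <;> have := hr j <;> omega
    · intro x hx
      simp only [Finset.mem_product, Fintype.mem_piFinset, Finset.mem_range] at hx
      simp only [Fintype.mem_piFinset, Finset.mem_range]
      intro j
      have h1 := hx.1 j
      have h2 := hx.2 j
      omega
    · intro r _
      dsimp only
      funext j
      omega
    · intro x hx
      simp only [Finset.mem_product, Fintype.mem_piFinset, Finset.mem_range] at hx
      have h1 : ∀ j, x.1 j < 2 := hx.1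
      dsimp only
      have h2 : (fun j => (2 * x.2 j + x.1 j) % 2) = x.1 := by
        funext j; have := h1 j; omega
      have h3 : (fun j => (2 * x.2 j + x.1 j) / 2) = x.2 := by
        funext j; have := h1 j; omega
      rw [Prod.ext_iff]
      exact ⟨h2, h3⟩
    · intro r _
      dsimp only
      congr 1
      funext j
      omega
  rw [h, Finset.sum_product]

lemma card_fun_bool : Fintype.card (Fin m → Bool) = 2^m := by
  simp [Fintype.card_fun]

lemma sign_prod (hm : 2 ≤ m) (c : (Fin m → Bool) → ℕ) (a : ℕ) (b : Fin m → ℕ) :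
    (∏ ε : Fin m → Bool, ((-1:ℤ))^((c ε + a + dot m ε b) % 2)) = sgn m c := by
  have e1 : ∀ ε : Fin m → Bool, ((-1:ℤ))^((c ε + a + dot m ε b) % 2)
      = (-1)^(c ε + a + dot m ε b) := fun ε => (neg_one_pow_eq_pow_mod_two _).symm
  rw [Finset.prod_congr rfl fun ε _ => e1 ε, Finset.prod_pow_eq_pow_sum]
  have e2 : ∑ ε : Fin m → Bool, (c ε + a + dot m ε b)
      = (∑ ε : Fin m → Bool, c ε) + (2^m * a + 2^(m-1) * ∑ j, b j) := by
    rw [Finset.sum_add_distrib, Finset.sum_add_distrib, sum_dot, Finset.sum_const,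
      Finset.card_univ, card_fun_bool]
    simp [mul_comm, add_assoc]
  rw [e2, pow_add, sgn_eq]
  have hev : Even (2^m * a + 2^(m-1) * ∑ j, b j) := by
    obtain ⟨mm, rfl⟩ := Nat.exists_eq_add_of_le hm
    refine ⟨2^(1+mm) * a + 2^mm * ∑ j, b j, ?_⟩
    have h1 : (2:ℕ)^(2+mm) = 2 * 2^(1+mm) := by rw [pow_add, pow_add]; ring
    have h2 : (2:ℕ)^(2+mm-1) = 2 * 2^mm := by
      have : 2+mm-1 = 1+mm := by omega
      rw [this, pow_add]; ring
    rw [h1, h2]; ring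
  rw [hev.neg_one_pow, mul_one]

lemma T_succ (hm : 2 ≤ m) (ρ : ℕ) (c : (Fin m → Bool) → ℕ) :
    T m (ρ+1) c = sgn m c * ∑ a ∈ Finset.range 2,
      ∑ b ∈ Fintype.piFinset (fun _ : Fin m => Finset.range 2), T m ρ (step m c a b) := by
  have key : ∀ (a : ℕ) (b : Fin m → ℕ) (n₀ : ℕ) (p : Fin m → ℕ),
      (∏ ε : Fin m → Bool, g (ρ+1) ((2*n₀ + a) + dot m ε (fun j => 2 * p j + b j) + c ε))
      = sgn m c * ∏ ε : Fin m → Bool, g ρ (n₀ + dot m ε p + step m c a b ε) := by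
    intro a b n₀ p
    have h1 : ∀ ε : Fin m → Bool,
        g (ρ+1) ((2*n₀ + a) + dot m ε (fun j => 2 * p j + b j) + c ε)
        = (-1)^((c ε + a + dot m ε b) % 2) * g ρ (n₀ + dot m ε p + step m c a b ε) := by
      intro ε
      rw [dot_add_mul]
      have h2 : (2*n₀ + a) + (2 * dot m ε p + dot m ε b) + c ε
          = 2*(n₀ + dot m ε p) + (c ε + a + dot m ε b) := by ring
      rw [h2, g_step]
      rfl
    rw [Finset.prod_congr rfl (fun ε _ => h1 ε), Finset.prod_mul_distrib, sign_prod m hm]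
  unfold T
  have h2 : (2:ℕ)^(ρ+1) = 2 * 2^ρ := by rw [pow_succ]; ring
  rw [h2, sum_split]
  rw [Finset.mul_sum]
  refine Finset.sum_congr rfl fun a _ => ?_
  have inner : ∀ y : ℕ,
      (∑ r ∈ Fintype.piFinset (fun _ : Fin m => Finset.range (2*2^ρ)),
        ∏ ε : Fin m → Bool, g (ρ+1) ((2*y + a) + dot m ε r + c ε))
      = ∑ b ∈ Fintype.piFinset (fun _ : Fin m => Finset.range 2),
          sgn m c * ∑ p ∈ Fintype.piFinset (fun _ : Fin m => Finset.range (2^ρ)),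
            ∏ ε : Fin m → Bool, g ρ (y + dot m ε p + step m c a b ε) := by
    intro y
    rw [sum_split_pi]
    refine Finset.sum_congr rfl fun b _ => ?_
    rw [Finset.mul_sum]
    exact Finset.sum_congr rfl fun p _ => key a b y p
  rw [Finset.sum_congr rfl fun y _ => inner y, Finset.sum_comm, Finset.mul_sum]
  refine Finset.sum_congr rfl fun b _ => ?_
  rw [Finset.mul_sum]

def SS : Finset ((Fin m → Bool) → ℕ) := Fintype.piFinset (fun _ => Finset.range (m+2))

lemma mem_SS {c : (Fin m → Bool) → ℕ} : c ∈ SS m ↔ ∀ ε, c ε < m+2 := by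
  simp [SS, Fintype.mem_piFinset]

lemma SS_nonempty : (SS m).Nonempty := ⟨fun _ => 0, (mem_SS m).2 fun _ => by omega⟩

def St : Finset (ℕ × (Fin m → ℕ)) :=
  Finset.range 2 ×ˢ Fintype.piFinset (fun _ : Fin m => Finset.range 2)

lemma mem_St {st : ℕ × (Fin m → ℕ)} : st ∈ St m ↔ st.1 < 2 ∧ ∀ j, st.2 j < 2 := by
  simp [St, Fintype.mem_piFinset]

lemma card_St : (St m).card = 2^(m+1) := by
  rw [St, Finset.card_product, Finset.card_range, Fintype.card_piFinset]
  simp [pow_succ, mul_comm]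

lemma T_succ' (hm : 2 ≤ m) (ρ : ℕ) (c : (Fin m → Bool) → ℕ) :
    T m (ρ+1) c = sgn m c * ∑ st ∈ St m, T m ρ (step m c st.1 st.2) := by
  rw [T_succ m hm ρ c, St, Finset.sum_product]

lemma step_mem {c : (Fin m → Bool) → ℕ} (hc : c ∈ SS m) {st : ℕ × (Fin m → ℕ)}
    (hst : st ∈ St m) : step m c st.1 st.2 ∈ SS m := by
  rw [mem_SS] at hc ⊢
  rw [mem_St] at hst
  intro ε
  have h1 := hc ε
  have h2 := hst.1
  have h3 : dot m ε st.2 ≤ m := dot_le m ε st.2 fun j => by have := hst.2 j; omega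
  unfold step
  omega

lemma T_zero (c : (Fin m → Bool) → ℕ) : T m 0 c = 1 := by
  unfold T
  rw [pow_zero, Finset.sum_range_one]
  have h : ∀ r ∈ Fintype.piFinset (fun _ : Fin m => Finset.range 1),
      (∏ ε : Fin m → Bool, g 0 (0 + dot m ε r + c ε)) = 1 := fun r _ =>
    Finset.prod_eq_one fun ε _ => g_zero _
  rw [Finset.sum_congr rfl h, Finset.sum_const, Fintype.card_piFinset]
  simp

lemma prod_g_abs (ρ : ℕ) (f : (Fin m → Bool) → ℕ) : |∏ ε : Fin m → Bool, g ρ (f ε)| = 1 := by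
  rw [Finset.abs_prod]
  exact Finset.prod_eq_one fun ε _ => g_abs _ _

lemma T_bound (ρ : ℕ) (c : (Fin m → Bool) → ℕ) : |T m ρ c| ≤ ((2:ℤ)^(m+1))^ρ := by
  have h1 : |T m ρ c| ≤ ∑ n ∈ Finset.range (2^ρ),
      ∑ r ∈ Fintype.piFinset (fun _ : Fin m => Finset.range (2^ρ)), (1:ℤ) := by
    refine (Finset.abs_sum_le_sum_abs _ _).trans ?_
    refine Finset.sum_le_sum fun n _ => ?_
    refine (Finset.abs_sum_le_sum_abs _ _).trans ?_
    refine Finset.sum_le_sum fun r _ => ?_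
    rw [prod_g_abs]
  refine h1.trans (le_of_eq ?_)
  rw [Finset.sum_const, Finset.sum_const, Finset.card_range, Fintype.card_piFinset]
  simp only [Finset.prod_const, Finset.card_range, Finset.card_univ, Fintype.card_fin,
    nsmul_eq_mul, mul_one]
  push_cast
  rw [← pow_succ', ← pow_mul, ← pow_mul, mul_comm ρ (m+1)]

noncomputable def u (ρ : ℕ) : ℤ := (SS m).sup' (SS_nonempty m) (fun c => |T m ρ c|)

lemma le_u {ρ : ℕ} {c : (Fin m → Bool) → ℕ} (hc : c ∈ SS m) : |T m ρ c| ≤ u m ρ := by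
  unfold u; exact Finset.le_sup' (fun c => |T m ρ c|) hc

lemma zero_mem_SS : (fun _ => 0) ∈ SS m := (mem_SS m).2 fun _ => by omega

lemma u_nonneg (ρ : ℕ) : 0 ≤ u m ρ := le_trans (abs_nonneg _) (le_u m (zero_mem_SS m))

lemma u_le (ρ : ℕ) : u m ρ ≤ ((2:ℤ)^(m+1))^ρ := by
  unfold u; exact Finset.sup'_le _ _ fun c _ => T_bound m ρ c

lemma u_succ_le (hm : 2 ≤ m) (ρ : ℕ) : u m (ρ+1) ≤ (2:ℤ)^(m+1) * u m ρ := by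
  rw [show u m (ρ+1) = (SS m).sup' (SS_nonempty m) (fun c => |T m (ρ+1) c|) from rfl]
  refine Finset.sup'_le _ _ fun c hc => ?_
  rw [T_succ' m hm ρ c, abs_mul, sgn_abs, one_mul]
  refine (Finset.abs_sum_le_sum_abs _ _).trans ?_
  calc ∑ st ∈ St m, |T m ρ (step m c st.1 st.2)|
      ≤ ∑ _st ∈ St m, u m ρ :=
        Finset.sum_le_sum fun st hst => le_u m (step_mem m hc hst)
    _ = (2:ℤ)^(m+1) * u m ρ := by
        rw [Finset.sum_const, card_St, nsmul_eq_mul]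
        push_cast
        ring

lemma u_mul (hm : 2 ≤ m) (ρ : ℕ) : ∀ k, u m (ρ+k) ≤ ((2:ℤ)^(m+1))^k * u m ρ := by
  intro k
  induction k with
  | zero => simp
  | succ n ih =>
      calc u m (ρ+(n+1)) = u m ((ρ+n)+1) := by ring_nf
        _ ≤ (2:ℤ)^(m+1) * u m (ρ+n) := u_succ_le m hm _
        _ ≤ (2:ℤ)^(m+1) * (((2:ℤ)^(m+1))^n * u m ρ) := by
            refine mul_le_mul_of_nonneg_left ih (by positivity)
        _ = ((2:ℤ)^(m+1))^(n+1) * u m ρ := by ring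

lemma Hpeel (hm : 2 ≤ m) (ρ : ℕ) {c : (Fin m → Bool) → ℕ} (hc : c ∈ SS m)
    {st : ℕ × (Fin m → ℕ)} (hst : st ∈ St m) :
    ∃ R : ℤ, T m (ρ+1) c = sgn m c * (T m ρ (step m c st.1 st.2) + R) ∧
      |R| ≤ ((2:ℤ)^(m+1) - 1) * u m ρ := by
  refine ⟨∑ s ∈ (St m).erase st, T m ρ (step m c s.1 s.2), ?_, ?_⟩
  · rw [T_succ' m hm ρ c]
    congr 1
    exact (Finset.add_sum_erase _ _ hst).symm
  · refine (Finset.abs_sum_le_sum_abs _ _).trans ?_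
    calc ∑ s ∈ (St m).erase st, |T m ρ (step m c s.1 s.2)|
        ≤ ∑ _s ∈ (St m).erase st, u m ρ :=
          Finset.sum_le_sum fun s hs => le_u m (step_mem m hc (Finset.mem_of_mem_erase hs))
      _ = ((2:ℤ)^(m+1) - 1) * u m ρ := by
          rw [Finset.sum_const, Finset.card_erase_of_mem hst, card_St, nsmul_eq_mul]
          have h2 : (1:ℕ) ≤ 2^(m+1) := Nat.one_le_two_pow
          push_cast [h2]
          ring

lemma peel2 (hm : 2 ≤ m) (ρ : ℕ) {c : (Fin m → Bool) → ℕ} (hc : c ∈ SS m)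
    {s₁ s₂ : ℕ × (Fin m → ℕ)} (h1 : s₁ ∈ St m) (h2 : s₂ ∈ St m) (hne : s₂ ≠ s₁) :
    ∃ R : ℤ, T m (ρ+1) c
        = sgn m c * (T m ρ (step m c s₁.1 s₁.2) + T m ρ (step m c s₂.1 s₂.2) + R) ∧
      |R| ≤ ((2:ℤ)^(m+1) - 2) * u m ρ := by
  refine ⟨∑ s ∈ ((St m).erase s₁).erase s₂, T m ρ (step m c s.1 s.2), ?_, ?_⟩
  · rw [T_succ' m hm ρ c]
    congr 1
    have hsum := Finset.add_sum_erase ((St m).erase s₁)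
      (fun s => T m ρ (step m c s.1 s.2)) (Finset.mem_erase.2 ⟨hne, h2⟩)
    have hsum1 := Finset.add_sum_erase (St m) (fun s => T m ρ (step m c s.1 s.2)) h1
    rw [add_assoc, hsum, hsum1]
  · refine (Finset.abs_sum_le_sum_abs _ _).trans ?_
    calc ∑ s ∈ ((St m).erase s₁).erase s₂, |T m ρ (step m c s.1 s.2)|
        ≤ ∑ _s ∈ ((St m).erase s₁).erase s₂, u m ρ :=
          Finset.sum_le_sum fun s hs => le_u m (step_mem m hc
            (Finset.mem_of_mem_erase (Finset.mem_of_mem_erase hs)))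
      _ = ((2:ℤ)^(m+1) - 2) * u m ρ := by
          rw [Finset.sum_const,
            Finset.card_erase_of_mem (Finset.mem_erase.2 ⟨hne, h2⟩),
            Finset.card_erase_of_mem h1, card_St, nsmul_eq_mul]
          have h3 : (2:ℕ) ≤ 2^(m+1) := by
            calc (2:ℕ) = 2^1 := by norm_num
              _ ≤ 2^(m+1) := Nat.pow_le_pow_right (by norm_num) (by omega)
          have hcard : (2:ℕ)^(m+1) - 1 - 1 = 2^(m+1) - 2 := by omega
          rw [hcard, Nat.cast_sub h3]
          push_cast
          ring

lemma step_zz (c : (Fin m → Bool) → ℕ) : step m c 0 (fun _ => 0) = fun ε => c ε / 2 := by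
  funext ε
  simp [step, dot_zero]

lemma sgn_zero : sgn m (fun _ => 0) = 1 := by simp [sgn]

lemma s0_mem_St : ((0:ℕ), (fun _ => (0:ℕ) : Fin m → ℕ)) ∈ St m := by
  rw [mem_St]
  exact ⟨by omega, fun j => by simp⟩

lemma step_zzz : step m (fun _ => 0) 0 (fun _ => 0) = (fun _ => (0:ℕ)) := by
  funext ε
  simp [step, dot_zero]

lemma Gzero (hm : 2 ≤ m) (ρ : ℕ) : ∀ k, ∃ R : ℤ,
    T m (ρ+k) (fun _ => 0) = T m ρ (fun _ => 0) + R ∧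
    |R| ≤ (((2:ℤ)^(m+1))^k - 1) * u m ρ := by
  intro k
  induction k with
  | zero => exact ⟨0, by simp, by simp [u_nonneg]⟩
  | succ n ih =>
      obtain ⟨R, hR, hRb⟩ := ih
      obtain ⟨R₁, hR₁, hR₁b⟩ := Hpeel m hm (ρ+n) (zero_mem_SS m) (s0_mem_St m)
      refine ⟨R + R₁, ?_, ?_⟩
      · dsimp only at hR₁
        rw [step_zzz, sgn_zero, one_mul] at hR₁
        rw [show ρ+(n+1) = (ρ+n)+1 from rfl, hR₁, hR]
        ring
      · refine (abs_add_le _ _).trans ?_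
        have h2 : |R₁| ≤ ((2:ℤ)^(m+1) - 1) * (((2:ℤ)^(m+1))^n * u m ρ) := by
          refine hR₁b.trans ?_
          refine mul_le_mul_of_nonneg_left (u_mul m hm ρ n) ?_
          have : (2:ℤ) ≤ 2^(m+1) := by
            calc (2:ℤ) = 2^1 := by norm_num
              _ ≤ 2^(m+1) := pow_le_pow_right₀ (by norm_num) (by omega)
          linarith
        calc |R| + |R₁| ≤ (((2:ℤ)^(m+1))^n - 1) * u m ρ
              + ((2:ℤ)^(m+1) - 1) * (((2:ℤ)^(m+1))^n * u m ρ) := add_le_add hRb h2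
          _ = (((2:ℤ)^(m+1))^(n+1) - 1) * u m ρ := by ring

def Ast (k : ℕ) : (Fin m → Bool) → ℕ :=
  fun ε => if (∀ j : Fin m, (j:ℕ) ≤ k → ε j = true) then 1 else 0

lemma Ast_le_one (k : ℕ) (ε : Fin m → Bool) : Ast m k ε ≤ 1 := by
  unfold Ast
  split <;> omega

lemma Ast_mem_SS (k : ℕ) : Ast m k ∈ SS m :=
  (mem_SS m).2 fun ε => by have := Ast_le_one m k ε; omega

lemma Ast_eq_prod (k : ℕ) (ε : Fin m → Bool) :
    Ast m k ε = ∏ j : Fin m, (if (j:ℕ) ≤ k then (if ε j then 1 else 0) else 1) := by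
  by_cases h : ∀ j : Fin m, (j:ℕ) ≤ k → ε j = true
  · rw [Ast, if_pos h]
    exact (Finset.prod_eq_one fun j _ => by
      by_cases hj : (j:ℕ) ≤ k
      · simp [hj, h j hj]
      · simp [hj]).symm
  · rw [Ast, if_neg h]
    push_neg at h
    obtain ⟨j₀, hj₀, hj₀'⟩ := h
    refine (Finset.prod_eq_zero (Finset.mem_univ j₀) ?_).symm
    simp [hj₀, hj₀']

lemma sum_Ast (k : ℕ) (hk : k < m) : ∑ ε : Fin m → Bool, Ast m k ε = 2^(m-1-k) := by
  rw [Finset.sum_congr rfl fun ε _ => Ast_eq_prod m k ε, ← Fintype.piFinset_univ,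
    Finset.sum_prod_piFinset Finset.univ
      (fun (j : Fin m) (t : Bool) => if (j:ℕ) ≤ k then (if t then (1:ℕ) else 0) else 1)]
  have h : ∀ j : Fin m, (∑ t : Bool, (if (j:ℕ) ≤ k then (if t then (1:ℕ) else 0) else 1))
      = if (j:ℕ) ≤ k then 1 else 2 := by
    intro j
    by_cases hj : (j:ℕ) ≤ k <;> simp [hj]
  rw [Finset.prod_congr rfl fun j _ => h j, Finset.prod_ite, Finset.prod_const,
    Finset.prod_const, one_pow, one_mul]
  congr 1
  rw [Finset.card_filter]
  rw [Fin.sum_univ_eq_sum_range (fun i => if ¬ i ≤ k then (1:ℕ) else 0) m]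
  rw [← Finset.card_filter]
  have h2 : Finset.filter (fun i => ¬ i ≤ k) (Finset.range m) = Finset.Ico (k+1) m := by
    ext i
    simp only [Finset.mem_filter, Finset.mem_range, Finset.mem_Ico]
    omega
  rw [h2, Nat.card_Ico]
  omega

lemma sgn_Ast_even (k : ℕ) (hk : k < m - 1) : sgn m (Ast m k) = 1 := by
  have h : m-1-k = (m-1-k-1)+1 := by omega
  rw [sgn_eq, sum_Ast m k (by omega), h, pow_succ]
  exact Even.neg_one_pow ⟨2^(m-1-k-1), by ring⟩

lemma sgn_Ast_last (hm : 2 ≤ m) : sgn m (Ast m (m-1)) = -1 := by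
  rw [sgn_eq, sum_Ast m (m-1) (by omega)]
  have h : m-1-(m-1) = 0 := by omega
  rw [h]
  norm_num

def b01 : Fin m → ℕ := fun j => if (j:ℕ) ≤ 1 then 1 else 0

def ebv (t : ℕ) : Fin m → ℕ := fun j => if (j:ℕ) = t then 1 else 0

lemma b01_mem_St (hm : 2 ≤ m) : ((0:ℕ), b01 m) ∈ St m := by
  rw [mem_St]
  refine ⟨by omega, fun j => ?_⟩
  dsimp only
  unfold b01
  split <;> omega

lemma ebv_mem_St (t : ℕ) : ((0:ℕ), ebv m t) ∈ St m := by
  rw [mem_St]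
  refine ⟨by omega, fun j => ?_⟩
  dsimp only
  unfold ebv
  split <;> omega

lemma dot_b01 (hm : 2 ≤ m) (ε : Fin m → Bool) :
    dot m ε (b01 m) = (if ε ⟨0, by omega⟩ then 1 else 0) + (if ε ⟨1, by omega⟩ then 1 else 0) := by
  unfold dot b01
  have hsub : ({(⟨0, by omega⟩ : Fin m), ⟨1, by omega⟩} : Finset (Fin m)) ⊆ Finset.univ :=
    Finset.subset_univ _
  rw [← Finset.sum_subset hsub]
  · rw [Finset.sum_pair (by
      intro h
      have := Fin.mk.injEq 0 (by omega : (0:ℕ) < m) 1 (by omega : (1:ℕ) < m) ▸ h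
      simp at this)]
    norm_num
  · intro j _ hj
    simp only [Finset.mem_insert, Finset.mem_singleton] at hj
    push_neg at hj
    have h0 : (j:ℕ) ≠ 0 := fun h => hj.1 (Fin.ext h)
    have h1 : (j:ℕ) ≠ 1 := fun h => hj.2 (Fin.ext h)
    have : ¬ (j:ℕ) ≤ 1 := by omega
    simp [this]

lemma dot_ebv (t : ℕ) (ht : t < m) (ε : Fin m → Bool) :
    dot m ε (ebv m t) = (if ε ⟨t, ht⟩ then 1 else 0) := by
  unfold dot ebv
  have hsub : ({(⟨t, ht⟩ : Fin m)} : Finset (Fin m)) ⊆ Finset.univ := Finset.subset_univ _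
  rw [← Finset.sum_subset hsub]
  · rw [Finset.sum_singleton]
    simp
  · intro j _ hj
    simp only [Finset.mem_singleton] at hj
    have h0 : (j:ℕ) ≠ t := fun h => hj (Fin.ext h)
    simp [h0]

lemma step_b01 (hm : 2 ≤ m) : step m (fun _ => 0) 0 (b01 m) = Ast m 1 := by
  funext ε
  rw [step]
  rw [dot_b01 m hm ε]
  have hiff : (∀ j : Fin m, (j:ℕ) ≤ 1 → ε j = true)
      ↔ (ε ⟨0, by omega⟩ = true ∧ ε ⟨1, by omega⟩ = true) := by
    constructor
    · intro h
      exact ⟨h _ (by simp), h _ (by simp)⟩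
    · rintro ⟨h0, h1⟩ j hj
      rcases (by omega : (j:ℕ) = 0 ∨ (j:ℕ) = 1) with h | h
      · rwa [show j = ⟨0, by omega⟩ from Fin.ext h]
      · rwa [show j = ⟨1, by omega⟩ from Fin.ext h]
  rw [Ast]
  by_cases h0 : ε ⟨0, by omega⟩ = true <;> by_cases h1 : ε ⟨1, by omega⟩ = true
  · rw [if_pos (hiff.2 ⟨h0, h1⟩)]
    simp [h0, h1]
  · rw [if_neg (fun h => h1 (hiff.1 h).2)]
    simp [h0, h1]
  · rw [if_neg (fun h => h0 (hiff.1 h).1)]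
    simp [h0, h1]
  · rw [if_neg (fun h => h0 (hiff.1 h).1)]
    simp [h0, h1]

lemma step_Ast (k : ℕ) (hk1 : 1 ≤ k) (hk : k + 1 < m) :
    step m (Ast m k) 0 (ebv m (k+1)) = Ast m (k+1) := by
  funext ε
  rw [step, dot_ebv m (k+1) hk ε]
  have hiff : (∀ j : Fin m, (j:ℕ) ≤ k+1 → ε j = true)
      ↔ ((∀ j : Fin m, (j:ℕ) ≤ k → ε j = true) ∧ ε ⟨k+1, hk⟩ = true) := by
    constructor
    · intro h
      exact ⟨fun j hj => h j (by omega), h _ (by simp)⟩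
    · rintro ⟨h0, h1⟩ j hj
      rcases Nat.lt_or_ge (j:ℕ) (k+1) with h | h
      · exact h0 j (by omega)
      · rwa [show j = ⟨k+1, hk⟩ from Fin.ext (by simp only [Fin.val_mk]; omega)]
  rw [Ast, Ast]
  by_cases h0 : ∀ j : Fin m, (j:ℕ) ≤ k → ε j = true <;> by_cases h1 : ε ⟨k+1, hk⟩ = true
  · rw [if_pos h0, if_pos (hiff.2 ⟨h0, h1⟩)]
    simp [h1]
  · rw [if_pos h0, if_neg (fun h => h1 (hiff.1 h).2)]
    simp [h1]
  · rw [if_neg h0, if_neg (fun h => h0 (hiff.1 h).1)]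
    simp [h1]
  · rw [if_neg h0, if_neg (fun h => h0 (hiff.1 h).1)]
    simp [h1]

lemma step_Ast_last (hm : 2 ≤ m) : step m (Ast m (m-1)) 0 (fun _ => 0) = (fun _ => (0:ℕ)) := by
  funext ε
  rw [step, dot_zero]
  have := Ast_le_one m (m-1) ε
  omega

lemma Hbranch (hm : 2 ≤ m) (ρ : ℕ) : ∀ k, 1 ≤ k → k ≤ m-1 → ∃ R : ℤ,
    T m (ρ+k) (Ast m (m-k)) = -T m ρ (fun _ => 0) + R ∧
    |R| ≤ (((2:ℤ)^(m+1))^k - 1) * u m ρ := by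
  intro k
  induction k with
  | zero => omega
  | succ n ih =>
      intro _ hn1
      rcases Nat.eq_zero_or_pos n with hn | hn
      · subst hn
        obtain ⟨R₁, hR₁, hR₁b⟩ := Hpeel m hm ρ (Ast_mem_SS m (m-1)) (s0_mem_St m)
        dsimp only at hR₁
        rw [step_Ast_last m hm, sgn_Ast_last m hm] at hR₁
        refine ⟨-R₁, ?_, ?_⟩
        · rw [show ρ+1 = ρ+1 from rfl, hR₁]
          ring
        · rw [abs_neg]
          refine hR₁b.trans (le_of_eq ?_)
          norm_num
      · obtain ⟨R, hR, hRb⟩ := ih hn (by omega)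
        obtain ⟨R₁, hR₁, hR₁b⟩ := Hpeel m hm (ρ+n) (Ast_mem_SS m (m-(n+1))) (ebv_mem_St m (m-n))
        dsimp only at hR₁
        have hstep : step m (Ast m (m-(n+1))) 0 (ebv m (m-n)) = Ast m (m-n) := by
          have h1 : m-(n+1)+1 = m-n := by omega
          have := step_Ast m (m-(n+1)) (by omega) (by omega)
          rwa [h1] at this
        have hsgn : sgn m (Ast m (m-(n+1))) = 1 := sgn_Ast_even m (m-(n+1)) (by omega)
        rw [hstep, hsgn, one_mul] at hR₁
        refine ⟨R + R₁, ?_, ?_⟩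
        · rw [show ρ+(n+1) = (ρ+n)+1 from rfl, hR₁, hR]
          ring
        · refine (abs_add_le _ _).trans ?_
          have h2 : |R₁| ≤ ((2:ℤ)^(m+1) - 1) * (((2:ℤ)^(m+1))^n * u m ρ) := by
            refine hR₁b.trans ?_
            refine mul_le_mul_of_nonneg_left (u_mul m hm ρ n) ?_
            have : (2:ℤ) ≤ 2^(m+1) := by
              calc (2:ℤ) = 2^1 := by norm_num
                _ ≤ 2^(m+1) := pow_le_pow_right₀ (by norm_num) (by omega)
            linarith
          calc |R| + |R₁| ≤ (((2:ℤ)^(m+1))^n - 1) * u m ρ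
                + ((2:ℤ)^(m+1) - 1) * (((2:ℤ)^(m+1))^n * u m ρ) := add_le_add hRb h2
            _ = (((2:ℤ)^(m+1))^(n+1) - 1) * u m ρ := by ring

lemma twopow_ge (hm : 2 ≤ m) : (2:ℤ) ≤ 2^(m+1) := by
  calc (2:ℤ) = 2^1 := by norm_num
    _ ≤ 2^(m+1) := pow_le_pow_right₀ (by norm_num) (by omega)

lemma cancel (hm : 2 ≤ m) (ρ : ℕ) :
    |T m (ρ+m) (fun _ => 0)| ≤ (((2:ℤ)^(m+1))^m - 2) * u m ρ := by
  have hne : ((0:ℕ), b01 m) ≠ ((0:ℕ), (fun _ => (0:ℕ) : Fin m → ℕ)) := by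
    intro h
    have h2 := congrArg (fun p => p.2 (⟨0, by omega⟩ : Fin m)) h
    simp [b01] at h2
  obtain ⟨R₀, hR₀, hR₀b⟩ := peel2 m hm (ρ+(m-1)) (zero_mem_SS m) (s0_mem_St m)
    (b01_mem_St m hm) hne
  dsimp only at hR₀
  rw [step_zzz, step_b01 m hm, sgn_zero, one_mul] at hR₀
  obtain ⟨RA, hRA, hRAb⟩ := Gzero m hm ρ (m-1)
  obtain ⟨RB, hRB, hRBb⟩ := Hbranch m hm ρ (m-1) (by omega) (le_refl _)
  have hA1 : m - (m-1) = 1 := by omega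
  rw [hA1] at hRB
  have hρ : ρ + m = (ρ+(m-1)) + 1 := by omega
  rw [hρ, hR₀, hRA, hRB]
  have hsum : T m ρ (fun _ => 0) + RA + (-T m ρ (fun _ => 0) + RB) + R₀
      = RA + RB + R₀ := by ring
  rw [hsum]
  have h1 : |RA + RB + R₀| ≤ |RA| + |RB| + |R₀| := by
    refine (abs_add_le _ _).trans ?_
    exact add_le_add (abs_add_le _ _) le_rfl
  refine h1.trans ?_
  have h2 : |R₀| ≤ ((2:ℤ)^(m+1) - 2) * (((2:ℤ)^(m+1))^(m-1) * u m ρ) := by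
    refine hR₀b.trans ?_
    refine mul_le_mul_of_nonneg_left (u_mul m hm ρ (m-1)) ?_
    have := twopow_ge m hm
    linarith
  have hKm : ((2:ℤ)^(m+1))^m = ((2:ℤ)^(m+1))^(m-1) * (2:ℤ)^(m+1) := by
    rw [← pow_succ]
    congr 1
    omega
  calc |RA| + |RB| + |R₀|
      ≤ ((((2:ℤ)^(m+1))^(m-1) - 1) * u m ρ) + ((((2:ℤ)^(m+1))^(m-1) - 1) * u m ρ)
        + ((2:ℤ)^(m+1) - 2) * (((2:ℤ)^(m+1))^(m-1) * u m ρ) :=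
        add_le_add (add_le_add hRAb hRBb) h2
    _ = (((2:ℤ)^(m+1))^(m-1) * (2:ℤ)^(m+1) - 2) * u m ρ := by ring
    _ = (((2:ℤ)^(m+1))^m - 2) * u m ρ := by rw [← hKm]

lemma descend (hm : 2 ≤ m) (ρ : ℕ) : ∀ j, ∀ c ∈ SS m, (∀ ε, c ε < 2^j) →
    |T m (ρ+m+j) c| ≤ (((2:ℤ)^(m+1))^(m+j) - 2) * u m ρ := by
  intro j
  induction j with
  | zero =>
      intro c _ hce
      have hc0 : c = (fun _ => 0) := funext fun ε => by have := hce ε; omega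
      subst hc0
      simpa using cancel m hm ρ
  | succ n ih =>
      intro c hc hce
      obtain ⟨R₁, hR₁, hR₁b⟩ := Hpeel m hm (ρ+m+n) hc (s0_mem_St m)
      dsimp only at hR₁
      rw [step_zz] at hR₁
      have hmem : (fun ε => c ε / 2) ∈ SS m := by
        rw [mem_SS] at hc ⊢
        intro ε
        have := hc ε
        omega
      have hlt : ∀ ε, c ε / 2 < 2^n := by
        intro ε
        have h1 := hce ε
        have h2 : (2:ℕ)^(n+1) = 2^n * 2 := pow_succ 2 n
        omega
      have hmain := ih (fun ε => c ε / 2) hmem hlt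
      rw [show ρ+m+(n+1) = (ρ+m+n)+1 from rfl, hR₁, abs_mul, sgn_abs, one_mul]
      refine (abs_add_le _ _).trans ?_
      have hu : u m (ρ+m+n) ≤ ((2:ℤ)^(m+1))^(m+n) * u m ρ := by
        rw [show ρ+m+n = ρ+(m+n) by ring]
        exact u_mul m hm ρ (m+n)
      have h2 : |R₁| ≤ ((2:ℤ)^(m+1) - 1) * (((2:ℤ)^(m+1))^(m+n) * u m ρ) := by
        refine hR₁b.trans ?_
        refine mul_le_mul_of_nonneg_left hu ?_
        have := twopow_ge m hm
        linarith
      calc |T m (ρ+m+n) (fun ε => c ε / 2)| + |R₁|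
          ≤ ((((2:ℤ)^(m+1))^(m+n) - 2) * u m ρ)
            + ((2:ℤ)^(m+1) - 1) * (((2:ℤ)^(m+1))^(m+n) * u m ρ) := add_le_add hmain h2
        _ = (((2:ℤ)^(m+1))^(m+n) * (2:ℤ)^(m+1) - 2) * u m ρ := by ring
        _ = (((2:ℤ)^(m+1))^(m+(n+1)) - 2) * u m ρ := by
            rw [← pow_succ, show m+n+1 = m+(n+1) by ring]

lemma m_plus_two_le (hm : 2 ≤ m) : m + 2 ≤ 2^m := by
  induction m, hm using Nat.le_induction with
  | base => norm_num
  | succ n hn ih =>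
      have h2 : (2:ℕ)^(n+1) = 2^n * 2 := pow_succ 2 n
      omega

lemma contract (hm : 2 ≤ m) (ρ : ℕ) :
    u m (ρ+2*m) ≤ (((2:ℤ)^(m+1))^(2*m) - 2) * u m ρ := by
  rw [show u m (ρ+2*m) = (SS m).sup' (SS_nonempty m) (fun c => |T m (ρ+2*m) c|) from rfl]
  refine Finset.sup'_le _ _ fun c hc => ?_
  have hce : ∀ ε, c ε < 2^m := by
    intro ε
    have h1 := (mem_SS m).1 hc ε
    have h2 := m_plus_two_le m hm
    omega
  have h := descend m hm ρ m c hc hce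
  rw [show ρ+m+m = ρ+2*m by ring, show m+m = 2*m by ring] at h
  exact h

lemma iterate (hm : 2 ≤ m) : ∀ q r : ℕ, u m (2*m*q + r) ≤
    (((2:ℤ)^(m+1))^(2*m) - 2)^q * ((2:ℤ)^(m+1))^r := by
  intro q
  induction q with
  | zero =>
      intro r
      simpa using u_le m r
  | succ n ih =>
      intro r
      have hK2 : (2:ℤ) ≤ ((2:ℤ)^(m+1))^(2*m) := by
        refine (twopow_ge m hm).trans ?_
        refine le_self_pow₀ ?_ (by omega)
        have := twopow_ge m hm
        linarith
      have h1 : u m (2*m*(n+1) + r) = u m ((2*m*n + r) + 2*m) := by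
        congr 1
        ring
      rw [h1]
      refine (contract m hm _).trans ?_
      calc (((2:ℤ)^(m+1))^(2*m) - 2) * u m (2*m*n + r)
          ≤ (((2:ℤ)^(m+1))^(2*m) - 2) * ((((2:ℤ)^(m+1))^(2*m) - 2)^n * ((2:ℤ)^(m+1))^r) :=
            mul_le_mul_of_nonneg_left (ih r) (by linarith)
        _ = (((2:ℤ)^(m+1))^(2*m) - 2)^(n+1) * ((2:ℤ)^(m+1))^r := by ring

lemma e_half (K : ℕ) : e ((1/2) * (K:ℝ)) = ((-1:ℂ))^K := by
  unfold e
  have h : (2 * (Real.pi:ℂ) * Complex.I * (((1/2) * (K:ℝ) : ℝ) : ℂ))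
      = (K:ℂ) * ((Real.pi:ℂ) * Complex.I) := by
    push_cast
    ring
  rw [h, Complex.exp_nat_mul, Complex.exp_pi_mul_I]

lemma T_eq (ρ : ℕ) :
    ∑ n ∈ Finset.range (2^ρ), ∑ r ∈ Fintype.piFinset (fun _ : Fin m => Finset.range (2^ρ)),
        e ((1/2) * ∑ ε : Fin m → Bool, (srho ρ (n + ∑ j, if ε j then r j else 0) : ℝ))
      = ((T m ρ (fun _ => 0) : ℤ) : ℂ) := by
  rw [T]
  push_cast
  refine Finset.sum_congr rfl fun n _ => ?_
  refine Finset.sum_congr rfl fun r _ => ?_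
  have h1 : (1/2 : ℝ) * ∑ ε : Fin m → Bool, (srho ρ (n + ∑ j, if ε j then r j else 0) : ℝ)
      = (1/2) * ((∑ ε : Fin m → Bool, srho ρ (n + dot m ε r) : ℕ) : ℝ) := by
    congr 1
    push_cast
    rfl
  rw [h1, e_half, ← Finset.prod_pow_eq_pow_sum]
  refine Finset.prod_congr rfl fun ε _ => ?_
  rw [g]
  push_cast
  norm_num

end TM

theorem stmt11 (m : ℕ) (hm : 2 ≤ m) : ∃ η₁ C : ℝ, 0 < η₁ ∧ 0 < C ∧ ∀ ρ : ℕ,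
    (1/2^((m+1)*ρ) : ℝ) * ‖∑ n ∈ Finset.range (2^ρ),
      ∑ r ∈ Fintype.piFinset (fun _ : Fin m => Finset.range (2^ρ)),
        e ((1/2) * ∑ ε : Fin m → Bool,
          (srho ρ (n + ∑ j, if ε j then r j else 0) : ℝ))‖
      ≤ C * (2:ℝ)^(-(η₁ * ρ)) := by
  set K : ℝ := (2:ℝ)^((m+1)*(2*m)) with hKdef
  have hK4 : (4:ℝ) ≤ K := by
    rw [hKdef]
    calc (4:ℝ) = 2^2 := by norm_num
      _ ≤ 2^((m+1)*(2*m)) := by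
          refine pow_le_pow_right₀ (by norm_num) ?_
          nlinarith
  have hKpos : (0:ℝ) < K := by linarith
  have hK2pos : (0:ℝ) < K - 2 := by linarith
  set θ : ℝ := (K-2)/K with hθdef
  have hθpos : 0 < θ := div_pos hK2pos hKpos
  have hθlt : θ < 1 := (div_lt_one hKpos).2 (by linarith)
  set η₁ : ℝ := -(Real.logb 2 θ)/(2*m) with hη
  set C : ℝ := K/(K-2) with hC
  have hmpos : (0:ℝ) < 2*m := by
    have : (2:ℝ) ≤ (m:ℝ) := by exact_mod_cast hm
    linarith
  refine ⟨η₁, C, ?_, ?_, ?_⟩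
  · rw [hη]
    refine div_pos ?_ hmpos
    have := Real.logb_neg (by norm_num : (1:ℝ) < 2) hθpos hθlt
    linarith
  · exact div_pos hKpos hK2pos
  · intro ρ
    set q := ρ / (2*m) with hq
    set r := ρ % (2*m) with hr
    have hρ : 2*m*q + r = ρ := Nat.div_add_mod ρ (2*m)
    have h1 : |TM.T m ρ (fun _ => 0)| ≤ (((2:ℤ)^(m+1))^(2*m) - 2)^q * ((2:ℤ)^(m+1))^r := by
      rw [← hρ]
      exact (TM.le_u m (TM.zero_mem_SS m)).trans (TM.iterate m hm q r)
    set B : ℝ := (2:ℝ)^((m+1)*r) with hB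
    have hBpos : (0:ℝ) < B := by positivity
    have h2 : |((TM.T m ρ (fun _ => 0) : ℤ) : ℝ)| ≤ (K - 2)^q * B := by
      rw [← Int.cast_abs]
      have e1 : ((((((2:ℤ)^(m+1))^(2*m) - 2)^q * ((2:ℤ)^(m+1))^r : ℤ)) : ℝ)
          = (K - 2)^q * B := by
        rw [Int.cast_mul, Int.cast_pow, Int.cast_pow, Int.cast_sub, Int.cast_pow,
          Int.cast_pow]
        rw [hKdef, hB, pow_mul 2 (m+1) (2*m), pow_mul 2 (m+1) r]
        norm_num
      rw [← e1]
      exact_mod_cast h1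
    have hnorm : ‖∑ n ∈ Finset.range (2^ρ),
        ∑ r' ∈ Fintype.piFinset (fun _ : Fin m => Finset.range (2^ρ)),
          e ((1/2) * ∑ ε : Fin m → Bool,
            (srho ρ (n + ∑ j, if ε j then r' j else 0) : ℝ))‖
        = |((TM.T m ρ (fun _ => 0) : ℤ) : ℝ)| := by
      rw [TM.T_eq m ρ]
      rw [show ((TM.T m ρ (fun _ => 0) : ℤ) : ℂ) = (((TM.T m ρ (fun _ => 0) : ℤ) : ℝ) : ℂ) by
        push_cast; rfl]
      rw [Complex.norm_real, Real.norm_eq_abs]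
    have hN : (2:ℝ)^((m+1)*ρ) = K^q * B := by
      rw [← hρ, show (m+1)*(2*m*q + r) = ((m+1)*(2*m))*q + (m+1)*r by ring, pow_add,
        pow_mul, hKdef, hB]
    have hNpos : (0:ℝ) < 2^((m+1)*ρ) := by positivity
    have h3 : θ^q * (2:ℝ)^((m+1)*ρ) = (K-2)^q * B := by
      rw [hN, hθdef, div_pow]
      field_simp
    have h4 : (1/2^((m+1)*ρ) : ℝ) * |((TM.T m ρ (fun _ => 0) : ℤ) : ℝ)| ≤ θ^q := by
      rw [one_div, inv_mul_eq_div, div_le_iff₀ hNpos, h3]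
      exact h2
    have h5 : (2:ℝ)^(-(η₁ * ρ)) = θ ^ ((ρ:ℝ)/(2*m)) := by
      rw [hη]
      rw [show -((-(Real.logb 2 θ)/(2*(m:ℝ))) * ρ) = Real.logb 2 θ * ((ρ:ℝ)/(2*m)) by ring]
      rw [Real.rpow_mul (by norm_num : (0:ℝ) ≤ 2),
        Real.rpow_logb (by norm_num) (by norm_num) hθpos]
    have hratio : (ρ:ℝ)/(2*m) ≤ (q:ℝ) + 1 := by
      rw [div_le_iff₀ hmpos]
      have hρr : (ρ:ℝ) = 2*(m:ℝ)*(q:ℝ) + (r:ℝ) := by exact_mod_cast hρ.symm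
      have hrlt : (r:ℝ) < 2*(m:ℝ) := by
        have : r < 2*m := Nat.mod_lt ρ (by omega)
        exact_mod_cast this
      have hq0 : (0:ℝ) ≤ (q:ℝ) := Nat.cast_nonneg q
      rw [hρr]
      nlinarith
    have h7 : θ ^ ((q:ℝ)+1) ≤ θ ^ ((ρ:ℝ)/(2*m)) :=
      Real.rpow_le_rpow_of_exponent_ge hθpos hθlt.le hratio
    have h8 : θ^q = C * θ ^ ((q:ℝ)+1) := by
      rw [Real.rpow_add hθpos, Real.rpow_one, Real.rpow_natCast, hC, hθdef]
      field_simp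
    rw [hnorm, h5]
    refine h4.trans ?_
    rw [h8]
    refine mul_le_mul_of_nonneg_left h7 ?_
    rw [hC]
    positivity
end

section
/- Fix 1 < c < 2 and small θ, θ₁ > 0 with θ₁ sufficiently small relative to θ. For N large and k with N^{θ/2} ≤ 2^k ≤ N^θ, the number of pairs of integers (n,m) with 2^k < n, m ≤ 2^{k+1} such that |(n/m)^c − a/b| < N^{−1/2−θ₁} for some positive integers a, b ≤ N^{θ₁} is at most M^{1−κ₀} for some κ₀ > 0, where M = 2^{2k}. -/
open scoped Classical

set_option maxHeartbeats 800000

lemma gap_aux {c x y : ℝ} (hc1 : 1 ≤ c) (hc2 : c ≤ 2) (hy : 1/2 ≤ y) (hxy : y ≤ x) :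
    y ^ c + (x - y) / 2 ≤ x ^ c := by
  have hy0 : (0:ℝ) < y := by linarith
  set t : ℝ := (x - y) / y with ht
  have ht0 : 0 ≤ t := div_nonneg (by linarith) hy0.le
  have hx_eq : x = y * (1 + t) := by
    rw [ht, mul_add, mul_div_assoc', mul_div_cancel_left₀ _ hy0.ne']; ring
  have h1 : (1 + t) ^ c ≥ 1 + c * t :=
    one_add_mul_self_le_rpow_one_add (by linarith) hc1
  have h2 : (1:ℝ) + c * t ≥ 1 + t := by nlinarith
  have hxc : x ^ c = y ^ c * (1 + t) ^ c := by
    rw [hx_eq, Real.mul_rpow hy0.le (by linarith)]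
  have hyc_pos : 0 < y ^ c := Real.rpow_pos_of_pos hy0 c
  have h3 : x ^ c ≥ y ^ c * (1 + t) := by
    rw [hxc]
    have := mul_le_mul_of_nonneg_left (le_trans h2 h1) hyc_pos.le
    linarith
  have h4 : y ^ c * t = y ^ (c - 1) * (x - y) := by
    have : y ^ c = y ^ (c - 1) * y := by
      rw [← Real.rpow_add_one hy0.ne' (c-1)]; ring_nf
    rw [this]
    rw [ht, mul_assoc, mul_div_assoc', mul_div_cancel_left₀ _ hy0.ne']
  have h5 : (1:ℝ)/2 ≤ y ^ (c - 1) := by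
    have ha : ((1:ℝ)/2) ^ (c - 1) ≤ y ^ (c - 1) :=
      Real.rpow_le_rpow (by norm_num) hy (by linarith)
    have hb : ((1:ℝ)/2) ^ (1:ℝ) ≤ ((1:ℝ)/2) ^ (c - 1) :=
      Real.rpow_le_rpow_of_exponent_ge (by norm_num) (by norm_num) (by linarith)
    rw [Real.rpow_one] at hb
    linarith
  have h6 : y ^ (c - 1) * (x - y) ≥ (x - y) / 2 := by nlinarith
  nlinarith [h3, h4]

lemma count_bad (c : ℝ) (hc1 : 1 < c) (hc2 : c < 2) (Qr δ : ℝ) (hQr : 0 ≤ Qr)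
    (hδ : 0 ≤ δ) (k : ℕ) :
    (((Finset.Ioc (2^k : ℕ) (2^(k+1)) ×ˢ Finset.Ioc (2^k : ℕ) (2^(k+1))).filter
      (fun p : ℕ × ℕ => ∃ a b : ℕ, 0 < a ∧ 0 < b ∧ (a:ℝ) ≤ Qr ∧ (b:ℝ) ≤ Qr ∧
        |((p.1:ℝ)/(p.2:ℝ))^c - (a:ℝ)/(b:ℝ)| < δ)).card : ℝ)
      ≤ ((2:ℝ)^(k+3) * δ + 1) * ((2:ℝ)^k * Qr^2) := by
  classical
  set S : Finset ℕ := Finset.Ioc (2^k) (2^(k+1)) with hS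
  set P : ℕ × ℕ → Prop := fun p => ∃ a b : ℕ, 0 < a ∧ 0 < b ∧ (a:ℝ) ≤ Qr ∧ (b:ℝ) ≤ Qr ∧
        |((p.1:ℝ)/(p.2:ℝ))^c - (a:ℝ)/(b:ℝ)| < δ with hPdef
  set B : Finset (ℕ × ℕ) := (S ×ˢ S).filter P with hB
  set Q : ℕ := ⌊Qr⌋₊ with hQ
  set D : ℕ := ⌊(2:ℝ)^(k+3) * δ⌋₊ with hD
  set w : ℕ × ℕ → ℕ × ℕ := fun p => if h : P p then (h.choose, h.choose_spec.choose) else (1,1)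
    with hwdef
  have hw : ∀ p : ℕ × ℕ, ∀ h : P p, 0 < (w p).1 ∧ 0 < (w p).2 ∧ ((w p).1:ℝ) ≤ Qr ∧
      ((w p).2:ℝ) ≤ Qr ∧ |((p.1:ℝ)/(p.2:ℝ))^c - ((w p).1:ℝ)/((w p).2:ℝ)| < δ := by
    intro p h
    simp only [hwdef, dif_pos h]
    exact h.choose_spec.choose_spec
  set f : ℕ × ℕ → ℕ × (ℕ × ℕ) := fun p => (p.2, w p) with hf
  -- membership facts
  have hmem : ∀ p ∈ B, p.1 ∈ S ∧ p.2 ∈ S ∧ P p := by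
    intro p hp
    rcases Finset.mem_filter.1 hp with ⟨hp1, hp2⟩
    rcases Finset.mem_product.1 hp1 with ⟨h1, h2⟩
    exact ⟨h1, h2, hp2⟩
  -- key spacing estimate
  have hkey : ∀ p ∈ B, ∀ q ∈ B, f p = f q → (p.1 : ℝ) ≤ (q.1 : ℝ) + (2:ℝ)^(k+3) * δ := by
    intro p hp q hq hfpq
    obtain ⟨hp1, hp2, hpP⟩ := hmem p hp
    obtain ⟨hq1, hq2, hqP⟩ := hmem q hq
    have hpq2 : p.2 = q.2 := congrArg Prod.fst hfpq
    have hwpq : w p = w q := congrArg Prod.snd hfpq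
    rcases le_or_gt (p.1 : ℝ) (q.1 : ℝ) with h | h
    · have h0 : (0:ℝ) ≤ (2:ℝ)^(k+3) * δ := by positivity
      linarith
    · -- q.1 < p.1
      obtain ⟨_, _, _, _, habs_p⟩ := hw p hpP
      obtain ⟨_, _, _, _, habs_q⟩ := hw q hqP
      rw [hwpq] at habs_p
      rw [hpq2] at habs_p
      set m : ℕ := q.2 with hm
      have hm_pos : 0 < m := lt_of_le_of_lt (Nat.zero_le _) (Finset.mem_Ioc.1 hq2).1
      have hm_le : (m:ℝ) ≤ 2^(k+1) := by exact_mod_cast (Finset.mem_Ioc.1 hq2).2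
      have hmR : (0:ℝ) < m := by exact_mod_cast hm_pos
      have hq1_lb : (2:ℝ)^k < q.1 := by exact_mod_cast (Finset.mem_Ioc.1 hq1).1
      set x : ℝ := (p.1:ℝ)/m with hx
      set y : ℝ := (q.1:ℝ)/m with hy
      have hyhalf : 1/2 ≤ y := by
        rw [hy, le_div_iff₀ hmR]
        have : (2:ℝ)^(k+1) = 2 * 2^k := by ring
        nlinarith
      have hxy : y ≤ x := by
        rw [hx, hy]
        gcongr
      have hgap := gap_aux hc1.le hc2.le hyhalf hxy
      have h2δ : x^c - y^c < 2 * δ := by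
        rw [abs_lt] at habs_p habs_q
        linarith [habs_p.1, habs_p.2, habs_q.1, habs_q.2]
      have hxmy : x - y < 4 * δ := by linarith
      have : (p.1:ℝ) - q.1 < 4 * δ * m := by
        have := (div_lt_iff₀ hmR).1 (by rw [hx, hy, ← sub_div] at hxmy; exact hxmy)
        linarith
      have h4m : 4 * δ * (m:ℝ) ≤ (2:ℝ)^(k+3) * δ := by
        have : (2:ℝ)^(k+3) = 4 * 2^(k+1) := by ring
        nlinarith
      linarith
  -- fiber bound
  have hfiber : ∀ t ∈ B.image f, (B.filter (fun p => f p = t)).card ≤ D + 1 := by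
    intro t _
    set F : Finset (ℕ × ℕ) := B.filter (fun p => f p = t) with hF
    rcases F.eq_empty_or_nonempty with hFe | hFne
    · simp [hFe]
    have hFmem : ∀ p ∈ F, p ∈ B ∧ f p = t := fun p hp => Finset.mem_filter.1 hp
    have hinj : Set.InjOn Prod.fst (F : Set (ℕ × ℕ)) := by
      intro p hp q hq h1
      obtain ⟨hpB, hpt⟩ := hFmem p hp
      obtain ⟨hqB, hqt⟩ := hFmem q hq
      have h2 : p.2 = q.2 := congrArg Prod.fst (hpt.trans hqt.symm)
      exact Prod.ext h1 h2
    have hcard : F.card = (F.image Prod.fst).card := (Finset.card_image_of_injOn hinj).symm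
    set F' : Finset ℕ := F.image Prod.fst with hF'
    have hF'ne : F'.Nonempty := hFne.image _
    have hsub : F' ⊆ Finset.Icc (F'.min' hF'ne) (F'.min' hF'ne + D) := by
      intro n hn
      refine Finset.mem_Icc.2 ⟨F'.min'_le n hn, ?_⟩
      obtain ⟨p, hp, hp1⟩ := Finset.mem_image.1 hn
      obtain ⟨q, hq, hq1⟩ := Finset.mem_image.1 (F'.min'_mem hF'ne)
      obtain ⟨hpB, hpt⟩ := hFmem p hp
      obtain ⟨hqB, hqt⟩ := hFmem q hq
      have hreal : (p.1 : ℝ) ≤ (q.1 : ℝ) + (2:ℝ)^(k+3) * δ :=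
        hkey p hpB q hqB (hpt.trans hqt.symm)
      have hfl : (2:ℝ)^(k+3) * δ < D + 1 := Nat.lt_floor_add_one _
      have hlt : (p.1 : ℝ) < ((q.1 + (D + 1) : ℕ) : ℝ) := by push_cast; linarith
      have := Nat.cast_lt.1 hlt
      omega
    calc F.card = F'.card := hcard
      _ ≤ (Finset.Icc (F'.min' hF'ne) (F'.min' hF'ne + D)).card := Finset.card_le_card hsub
      _ = D + 1 := by rw [Nat.card_Icc]; omega
  -- image bound
  have himg : B.image f ⊆ S ×ˢ (Finset.Icc 1 Q ×ˢ Finset.Icc 1 Q) := by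
    intro t ht
    obtain ⟨p, hp, rfl⟩ := Finset.mem_image.1 ht
    obtain ⟨hp1, hp2, hpP⟩ := hmem p hp
    obtain ⟨ha0, hb0, haQ, hbQ, _⟩ := hw p hpP
    refine Finset.mem_product.2 ⟨hp2, Finset.mem_product.2 ⟨?_, ?_⟩⟩
    · exact Finset.mem_Icc.2 ⟨ha0, Nat.le_floor haQ⟩
    · exact Finset.mem_Icc.2 ⟨hb0, Nat.le_floor hbQ⟩
  have hScard : S.card = 2^k := by
    rw [hS, Nat.card_Ioc, pow_succ]
    omega
  have himgcard : (B.image f).card ≤ 2^k * (Q * Q) := by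
    calc (B.image f).card ≤ (S ×ˢ (Finset.Icc 1 Q ×ˢ Finset.Icc 1 Q)).card :=
          Finset.card_le_card himg
      _ = 2^k * (Q * Q) := by
          rw [Finset.card_product, Finset.card_product, hScard]
          simp [Nat.card_Icc]
  have hnat : B.card ≤ (D + 1) * (2^k * (Q * Q)) := by
    calc B.card ≤ (D + 1) * (B.image f).card := Finset.card_le_mul_card_image B (D+1) hfiber
      _ ≤ (D + 1) * (2^k * (Q * Q)) := Nat.mul_le_mul_left _ himgcard
  -- pass to reals
  have hcast : (B.card : ℝ) ≤ ((D:ℝ) + 1) * ((2:ℝ)^k * ((Q:ℝ) * Q)) := by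
    exact_mod_cast Nat.cast_le.2 hnat
  have hDle : (D:ℝ) ≤ (2:ℝ)^(k+3) * δ := Nat.floor_le (by positivity)
  have hQle : (Q:ℝ) ≤ Qr := Nat.floor_le hQr
  have hQ0 : (0:ℝ) ≤ Q := Nat.cast_nonneg _
  calc (B.card : ℝ) ≤ ((D:ℝ) + 1) * ((2:ℝ)^k * ((Q:ℝ) * Q)) := hcast
    _ ≤ ((2:ℝ)^(k+3) * δ + 1) * ((2:ℝ)^k * Qr^2) := by
        have : (Q:ℝ) * Q ≤ Qr^2 := by nlinarith
        gcongr


theorem stmt13 (c θ : ℝ) (hc1 : 1 < c) (hc2 : c < 2) (hθ : 0 < θ) :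
    ∃ θ₁ κ₀ : ℝ, 0 < θ₁ ∧ 0 < κ₀ ∧ ∃ N₀ : ℕ, ∀ N ≥ N₀, ∀ k : ℕ,
      (N:ℝ)^(θ/2) ≤ 2^k → (2:ℝ)^k ≤ (N:ℝ)^θ →
      (((Finset.Ioc (2^k : ℕ) (2^(k+1)) ×ˢ Finset.Ioc (2^k : ℕ) (2^(k+1))).filter
        (fun p : ℕ × ℕ => ∃ a b : ℕ, 0 < a ∧ 0 < b ∧
          (a:ℝ) ≤ (N:ℝ)^θ₁ ∧ (b:ℝ) ≤ (N:ℝ)^θ₁ ∧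
          |((p.1:ℝ)/(p.2:ℝ))^c - (a:ℝ)/(b:ℝ)| < (N:ℝ)^(-(1/2:ℝ)-θ₁))).card : ℝ)
        ≤ ((2:ℝ)^(2*k))^(1-κ₀) := by
  classical
  set θ₁ : ℝ := min θ 1 / 8 with hθ₁def
  set κ₀ : ℝ := min 1 θ⁻¹ / 8 with hκ₀def
  have hθ₁pos : 0 < θ₁ := by
    rw [hθ₁def]
    have := lt_min hθ one_pos
    linarith
  have hκ₀pos : 0 < κ₀ := by
    rw [hκ₀def]
    have := lt_min one_pos (inv_pos.2 hθ)
    linarith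
  have hθ₁θ : θ₁ ≤ θ/8 := by
    rw [hθ₁def]
    have := min_le_left θ 1
    linarith
  have hθ₁8 : θ₁ ≤ 1/8 := by
    rw [hθ₁def]
    have := min_le_right θ 1
    linarith
  have hκ8 : κ₀ ≤ 1/8 := by
    rw [hκ₀def]
    have := min_le_left 1 θ⁻¹
    linarith
  have hκθ : θ * κ₀ ≤ 1/8 := by
    rw [hκ₀def]
    have h1 : min 1 θ⁻¹ ≤ θ⁻¹ := min_le_right _ _
    have h2 : θ * (min 1 θ⁻¹) ≤ θ * θ⁻¹ := by
      exact mul_le_mul_of_nonneg_left h1 hθ.le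
    rw [mul_inv_cancel₀ hθ.ne'] at h2
    calc θ * (min 1 θ⁻¹ / 8) = θ * min 1 θ⁻¹ / 8 := by ring
      _ ≤ 1/8 := by linarith
  clear_value θ₁ κ₀
  refine ⟨θ₁, κ₀, hθ₁pos, hκ₀pos, max (2^32) ⌈(2:ℝ)^(8/θ)⌉₊ + 1, ?_⟩
  intro N hN k hk1 hk2
  have hNpos : (0:ℝ) < N := by
    have : 0 < N := by omega
    exact_mod_cast this
  have hN1 : (1:ℝ) ≤ N := by
    have : 1 ≤ N := by omega
    exact_mod_cast this
  have h2pos : (0:ℝ) < 2 := two_pos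
  have hN32 : (2:ℝ)^(32:ℝ) ≤ N := by
    have h : (2^32 : ℕ) ≤ N := le_trans (le_max_left _ ⌈(2:ℝ)^(8/θ)⌉₊) (by omega)
    have h2 : ((2^32 : ℕ) : ℝ) ≤ N := by exact_mod_cast h
    rw [show (32:ℝ) = ((32:ℕ):ℝ) by norm_num, Real.rpow_natCast]
    exact_mod_cast h2
  have hNθR : (2:ℝ)^(8/θ) ≤ N := by
    have h : ⌈(2:ℝ)^(8/θ)⌉₊ ≤ N := le_trans (le_max_right (2^32) _) (by omega)
    calc (2:ℝ)^(8/θ) ≤ (⌈(2:ℝ)^(8/θ)⌉₊ : ℝ) := Nat.le_ceil _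
      _ ≤ N := by exact_mod_cast h
  set K : ℝ := (k : ℝ) with hK
  have e2 : ((2:ℝ)^k : ℝ) = (2:ℝ)^K := by rw [Real.rpow_natCast]
  have e3 : ((2:ℝ)^(k+3) : ℝ) = (2:ℝ)^(K+3) := by
    rw [show K+3 = ((k+3:ℕ):ℝ) by push_cast; ring, Real.rpow_natCast]
  have h1' : (N:ℝ)^(θ/2) ≤ (2:ℝ)^K := by rw [← e2]; exact hk1
  have h2' : (2:ℝ)^K ≤ (N:ℝ)^θ := by rw [← e2]; exact hk2
  have h24 : (2:ℝ)^(4:ℝ) = 16 := by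
    rw [show (4:ℝ) = ((4:ℕ):ℝ) by norm_num, Real.rpow_natCast]; norm_num
  have hN16 : (16:ℝ) ≤ (N:ℝ)^(θ/2) := by
    have hb : ((2:ℝ)^(8/θ))^(θ/2) ≤ (N:ℝ)^(θ/2) :=
      Real.rpow_le_rpow (by positivity) hNθR (by positivity)
    rw [← Real.rpow_mul h2pos.le] at hb
    rw [show 8/θ * (θ/2) = 4 by field_simp; ring] at hb
    rw [h24] at hb
    exact hb
  have hk4 : (4:ℝ) ≤ K := by
    have : (2:ℝ)^(4:ℝ) ≤ (2:ℝ)^K := by rw [h24]; linarith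
    exact (Real.rpow_le_rpow_left_iff (by norm_num)).1 this
  have hN18 : (2:ℝ)^(4:ℝ) ≤ (N:ℝ)^(1/8:ℝ) := by
    have hb : ((2:ℝ)^(32:ℝ))^(1/8:ℝ) ≤ (N:ℝ)^(1/8:ℝ) :=
      Real.rpow_le_rpow (by positivity) hN32 (by norm_num)
    rw [← Real.rpow_mul h2pos.le] at hb
    rw [show (32:ℝ) * (1/8) = 4 by norm_num] at hb
    exact hb
  clear_value K
  set E : ℝ := 2*K*(1-κ₀) with hE
  clear_value E
  -- apply the counting lemma
  refine le_trans (count_bad c hc1 hc2 ((N:ℝ)^θ₁) ((N:ℝ)^(-(1/2:ℝ)-θ₁))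
    (by positivity) (by positivity) k) ?_
  -- now purely analytic
  have eRHS : ((2:ℝ)^(2*k))^(1-κ₀) = (2:ℝ)^E := by
    rw [show ((2:ℝ)^(2*k) : ℝ) = (2:ℝ)^(2*K) by
        rw [show 2*K = ((2*k:ℕ):ℝ) by rw [hK]; push_cast; ring, Real.rpow_natCast],
      ← Real.rpow_mul h2pos.le, hE]
  rw [eRHS, e2, e3]
  -- expand LHS
  have m1 : (2:ℝ)^(K+3) * (2:ℝ)^K = (2:ℝ)^(2*K+3) := by
    rw [← Real.rpow_add h2pos]; congr 1; ring
  have m2 : (N:ℝ)^(-(1/2:ℝ)-θ₁) * ((N:ℝ)^θ₁ * (N:ℝ)^θ₁) = (N:ℝ)^(θ₁-1/2) := by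
    rw [← Real.rpow_add hNpos, ← Real.rpow_add hNpos]; congr 1; ring
  have m3 : (N:ℝ)^θ₁ * (N:ℝ)^θ₁ = (N:ℝ)^(θ₁+θ₁) := (Real.rpow_add hNpos _ _).symm
  have expand : ((2:ℝ)^(K+3) * (N:ℝ)^(-(1/2:ℝ)-θ₁) + 1) * ((2:ℝ)^K * ((N:ℝ)^θ₁)^2)
      = (2:ℝ)^(2*K+3) * (N:ℝ)^(θ₁-1/2) + (2:ℝ)^K * (N:ℝ)^(θ₁+θ₁) := by
    rw [sq]
    calc ((2:ℝ)^(K+3) * (N:ℝ)^(-(1/2:ℝ)-θ₁) + 1) * ((2:ℝ)^K * ((N:ℝ)^θ₁ * (N:ℝ)^θ₁))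
        = ((2:ℝ)^(K+3) * (2:ℝ)^K) * ((N:ℝ)^(-(1/2:ℝ)-θ₁) * ((N:ℝ)^θ₁ * (N:ℝ)^θ₁))
          + (2:ℝ)^K * ((N:ℝ)^θ₁ * (N:ℝ)^θ₁) := by ring
      _ = (2:ℝ)^(2*K+3) * (N:ℝ)^(θ₁-1/2) + (2:ℝ)^K * (N:ℝ)^(θ₁+θ₁) := by
          rw [m1, m2, m3]
  rw [expand]
  -- hX : 2^(2Kκ₀+4) ≤ N^(1/2-θ₁)
  have hX : (2:ℝ)^(2*K*κ₀+4) ≤ (N:ℝ)^(1/2-θ₁) := by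
    have e4 : (2:ℝ)^(2*K*κ₀+4) = ((2:ℝ)^K)^(2*κ₀) * (2:ℝ)^(4:ℝ) := by
      rw [← Real.rpow_mul h2pos.le, ← Real.rpow_add h2pos]
      congr 1; ring
    rw [e4]
    have hm1 : ((2:ℝ)^K)^(2*κ₀) ≤ ((N:ℝ)^θ)^(2*κ₀) :=
      Real.rpow_le_rpow (by positivity) h2' (by positivity)
    have hm : ((2:ℝ)^K)^(2*κ₀) * (2:ℝ)^(4:ℝ) ≤ ((N:ℝ)^θ)^(2*κ₀) * (N:ℝ)^(1/8:ℝ) :=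
      mul_le_mul hm1 hN18 (by positivity) (by positivity)
    refine le_trans hm ?_
    rw [← Real.rpow_mul hNpos.le, ← Real.rpow_add hNpos]
    apply Real.rpow_le_rpow_of_exponent_le hN1
    nlinarith [hκθ, hθ₁8, hκ₀pos]
  -- bound 1
  have bound1 : (2:ℝ)^(2*K+3) * (N:ℝ)^(θ₁-1/2) ≤ (2:ℝ)^(E-1) := by
    have hstep : (N:ℝ)^(θ₁-1/2) ≤ (2:ℝ)^(-(2*K*κ₀+4)) := by
      have hXpos : (0:ℝ) < (2:ℝ)^(2*K*κ₀+4) := Real.rpow_pos_of_pos h2pos _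
      have hinv : ((N:ℝ)^(1/2-θ₁))⁻¹ ≤ ((2:ℝ)^(2*K*κ₀+4))⁻¹ := by
        apply inv_anti₀ hXpos hX
      calc (N:ℝ)^(θ₁-1/2) = ((N:ℝ)^(1/2-θ₁))⁻¹ := by
            rw [← Real.rpow_neg hNpos.le]; congr 1; ring
        _ ≤ ((2:ℝ)^(2*K*κ₀+4))⁻¹ := hinv
        _ = (2:ℝ)^(-(2*K*κ₀+4)) := (Real.rpow_neg h2pos.le _).symm
    calc (2:ℝ)^(2*K+3) * (N:ℝ)^(θ₁-1/2)
        ≤ (2:ℝ)^(2*K+3) * (2:ℝ)^(-(2*K*κ₀+4)) := by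
          exact mul_le_mul_of_nonneg_left hstep (by positivity)
      _ = (2:ℝ)^(E-1) := by
          rw [← Real.rpow_add h2pos]; congr 1; rw [hE]; ring
  -- bound 2
  have bound2 : (2:ℝ)^K * (N:ℝ)^(θ₁+θ₁) ≤ (2:ℝ)^(E-1) := by
    have hstep2 : (N:ℝ)^(θ₁+θ₁) ≤ (2:ℝ)^(K/2) := by
      calc (N:ℝ)^(θ₁+θ₁) ≤ (N:ℝ)^(θ/4) :=
            Real.rpow_le_rpow_of_exponent_le hN1 (by linarith)
        _ = ((N:ℝ)^(θ/2))^(1/2:ℝ) := by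
            rw [← Real.rpow_mul hNpos.le]; congr 1; ring
        _ ≤ ((2:ℝ)^K)^(1/2:ℝ) :=
            Real.rpow_le_rpow (by positivity) h1' (by norm_num)
        _ = (2:ℝ)^(K/2) := by
            rw [← Real.rpow_mul h2pos.le]; congr 1; ring
    calc (2:ℝ)^K * (N:ℝ)^(θ₁+θ₁) ≤ (2:ℝ)^K * (2:ℝ)^(K/2) := by
          exact mul_le_mul_of_nonneg_left hstep2 (by positivity)
      _ = (2:ℝ)^(K+K/2) := (Real.rpow_add h2pos _ _).symm
      _ ≤ (2:ℝ)^(E-1) := by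
          apply Real.rpow_le_rpow_of_exponent_le one_le_two
          rw [hE]
          nlinarith [hk4, hκ8, hκ₀pos]
  have hhalf : (2:ℝ)^(E-1) + (2:ℝ)^(E-1) = (2:ℝ)^E := by
    rw [show E-1 = E + (-1) by ring, Real.rpow_add h2pos, Real.rpow_neg_one]
    ring
  linarith
end

section
/- Let λ > i·μ + σ ≥ σ ≥ 3 be positive integers and let M be a nonnegative integer whose binary expansion has at least one digit equal to 1 and at least one digit equal to 0 among the positions j with λ − iμ − σ + 2 < j ≤ λ − iμ. Then for any integer A with |A| < 2^{λ−iμ−σ+2}, the binary digits of M + A in positions j with λ − iμ < j ≤ λ − (i−1)μ coincide with those of M. -/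
theorem stmt16 (lam i μ σ : ℕ) (hi : 0 < i) (hσ : 3 ≤ σ) (hlam : i*μ + σ < lam)
    (M : ℕ) (A : ℤ) (hA : |A| < 2^(lam - i*μ - σ + 2))
    (h1 : ∃ j₁, lam - i*μ - σ + 2 < j₁ ∧ j₁ ≤ lam - i*μ ∧ M.testBit j₁ = true)
    (h0 : ∃ j₀, lam - i*μ - σ + 2 < j₀ ∧ j₀ ≤ lam - i*μ ∧ M.testBit j₀ = false) :
    ∀ j, lam - i*μ < j → j ≤ lam - (i-1)*μ →
      (((M : ℤ) + A).toNat).testBit j = M.testBit j := by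
  obtain ⟨j₁, hkj1, hj1L, hb1⟩ := h1
  obtain ⟨j₀, hkj0, hj0L, hb0⟩ := h0
  intro j hjL hjU
  set L := lam - i*μ with hLdef
  set k := lam - i*μ - σ + 2 with hkdef
  set r := M % 2^(L+1) with hrdef
  set q := M / 2^(L+1) with hqdef
  have hpos : 0 < (2:ℕ)^(L+1) := Nat.two_pow_pos _
  have hrlt : r < 2^(L+1) := Nat.mod_lt _ hpos
  -- lower bound on r
  have hrge : 2^k ≤ r := by
    have ht : r.testBit j₁ = true := by
      rw [hrdef, Nat.testBit_mod_two_pow]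
      simp [hb1, Nat.lt_succ_of_le hj1L]
    rw [Nat.testBit_eq_decide_div_mod_eq] at ht
    have h2 : r / 2^j₁ % 2 = 1 := by simpa using ht
    have h3 : 2^j₁ ≤ r := by
      by_contra h
      push_neg at h
      rw [Nat.div_eq_of_lt h] at h2; simp at h2
    exact le_trans (Nat.pow_le_pow_right (by norm_num) (le_of_lt hkj1)) h3
  -- upper bound on r
  have hrub : r + 2^j₀ < 2^(L+1) := by
    have ht : r.testBit j₀ = false := by
      rw [hrdef, Nat.testBit_mod_two_pow]
      simp [hb0, Nat.lt_succ_of_le hj0L]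
    rw [Nat.testBit_eq_decide_div_mod_eq] at ht
    have hbit0 : r / 2^j₀ % 2 = 0 := by
      have := Nat.mod_two_eq_zero_or_one (r / 2^j₀)
      simp at ht; omega
    have hb : r % 2^(j₀+1) < 2^j₀ := by
      have h1 : r % 2^(j₀+1) / 2^j₀ = r / 2^j₀ % 2 := by
        rw [pow_succ, Nat.mod_mul_right_div_self]
      rw [hbit0] at h1
      exact (Nat.div_eq_zero_iff.mp h1).resolve_left (Nat.two_pow_pos _).ne'
    have hsplit : 2^(j₀+1) * (r / 2^(j₀+1)) + r % 2^(j₀+1) = r :=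
      Nat.div_add_mod r (2^(j₀+1))
    have ha : r / 2^(j₀+1) < 2^(L - j₀) := by
      rw [Nat.div_lt_iff_lt_mul (Nat.two_pow_pos _)]
      calc r < 2^(L+1) := hrlt
        _ = 2^(L - j₀) * 2^(j₀+1) := by
            rw [← pow_add]; congr 1; omega
    have hmul : (r / 2^(j₀+1) + 1) * 2^(j₀+1) ≤ 2^(L - j₀) * 2^(j₀+1) :=
      Nat.mul_le_mul_right _ ha
    have hpow : 2^(L - j₀) * 2^(j₀+1) = 2^(L+1) := by
      rw [← pow_add]; congr 1; omega
    have h2j : (2:ℕ)^(j₀+1) = 2^j₀ + 2^j₀ := by rw [pow_succ]; ring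
    calc r + 2^j₀ = 2^(j₀+1) * (r / 2^(j₀+1)) + (r % 2^(j₀+1) + 2^j₀) := by omega
      _ < 2^(j₀+1) * (r / 2^(j₀+1)) + 2^(j₀+1) := by omega
      _ = (r / 2^(j₀+1) + 1) * 2^(j₀+1) := by ring
      _ ≤ 2^(L - j₀) * 2^(j₀+1) := hmul
      _ = 2^(L+1) := hpow
  -- bounds transferred to A
  have hAk : |A| < 2^k := by
    calc |A| < 2^(lam - i*μ - σ + 2) := hA
      _ = 2^k := by rw [hkdef]
  have hAabs := abs_lt.mp hAk
  have hk0 : (2:ℤ)^k ≤ 2^j₀ := by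
    apply pow_le_pow_right₀ (by norm_num) (le_of_lt hkj0)
  -- the integer sum
  have hMsplit : (M:ℤ) = (q:ℤ) * 2^(L+1) + (r:ℤ) := by
    have h : 2^(L+1) * q + r = M := Nat.div_add_mod M (2^(L+1))
    have h2 : ((2^(L+1) * q + r : ℕ) : ℤ) = (M:ℤ) := congrArg (Nat.cast : ℕ → ℤ) h
    push_cast at h2
    linarith
  have hs0 : 0 ≤ (r:ℤ) + A := by
    have : (2:ℤ)^k ≤ (r:ℤ) := by exact_mod_cast hrge
    linarith [hAabs.1]
  have hs1 : (r:ℤ) + A < 2^(L+1) := by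
    have h1 : (r:ℤ) + 2^j₀ < 2^(L+1) := by exact_mod_cast hrub
    linarith [hAabs.2]
  set s : ℤ := (r:ℤ) + A with hsdef
  have hN : ((M:ℤ) + A) = (q:ℤ) * 2^(L+1) + s := by rw [hMsplit, hsdef]; ring
  have hNtoNat : ((M:ℤ) + A).toNat = q * 2^(L+1) + s.toNat := by
    have : ((M:ℤ) + A) = ((q * 2^(L+1) + s.toNat : ℕ) : ℤ) := by
      push_cast [Int.toNat_of_nonneg hs0]
      rw [hN]
    rw [this, Int.toNat_natCast]
  have hstoNat : s.toNat < 2^(L+1) := by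
    have : (s.toNat : ℤ) < ((2^(L+1) : ℕ) : ℤ) := by
      rw [Int.toNat_of_nonneg hs0]; exact_mod_cast hs1
    exact_mod_cast this
  -- high divisions agree
  have hdiv : ((M:ℤ) + A).toNat / 2^(L+1) = M / 2^(L+1) := by
    rw [hNtoNat, Nat.mul_comm, Nat.mul_add_div hpos, Nat.div_eq_of_lt hstoNat, hqdef]
    omega
  -- conclude on bits
  have hj : j = (L+1) + (j - (L+1)) := by omega
  rw [Nat.testBit_eq_decide_div_mod_eq, Nat.testBit_eq_decide_div_mod_eq]
  have key : ∀ x : ℕ, x / 2^j = x / 2^(L+1) / 2^(j - (L+1)) := by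
    intro x
    rw [Nat.div_div_eq_div_mul, ← pow_add, ← hj]
  rw [key, key, hdiv]
end
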